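/- arXiv:2107.09290 — 8 statements merged into one kernel-verified Lean document; each statement's English description precedes it below -/
import Mathlib

section
/- Let $K$ be the complete graph on $[n]$, $c : E(K) \to \{-1,+1\}$ an edge labeling, and $G$ a spanning subgraph of $K$. If $\sigma = \{ m^+(G_\pi) : \pi \in S_n \}$ and $m_1^+ < m_2^+ < \cdots < m_k^+$ are its elements in increasing order, then $m_{i+1}^+ - m_i^+ \le \Delta(G) + \delta(G)$ for every $i \in [k-1]$, where $\Delta(G)$ and $\delta(G)$ are the maximum and minimum degree of $G$. -/
open Finset

/-- Consecutive values in the set σ = { m⁺(G_π) : π ∈ Sₙ } differ by at most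
Δ(G) + δ(G). -/
theorem stmt_1 (n : ℕ) (c : Sym2 (Fin n) → ℤ)
    (hc : ∀ e : Sym2 (Fin n), ¬ e.IsDiag → c e = 1 ∨ c e = -1)
    (G : SimpleGraph (Fin n)) [DecidableRel G.Adj]
    (σ : Finset ℕ)
    (hσ : σ = Finset.univ.image
      (fun π : Equiv.Perm (Fin n) =>
        (G.edgeFinset.filter (fun e => c (Sym2.map π e) = 1)).card))
    (a b : ℕ) (ha : a ∈ σ) (hb : b ∈ σ) (hab : a < b)
    (hconsec : ∀ x ∈ σ, ¬ (a < x ∧ x < b)) :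
    b - a ≤ G.maxDegree + G.minDegree := by
  classical
  subst hσ
  set f : Equiv.Perm (Fin n) → ℕ :=
    fun π => (G.edgeFinset.filter (fun e => c (Sym2.map π e) = 1)).card with hf
  set D := G.maxDegree + G.minDegree with hD
  -- trivial case n = 0
  rcases Nat.eq_zero_or_pos n with hn | hn
  · subst hn
    obtain ⟨π₁, -, h1⟩ := Finset.mem_image.mp ha
    obtain ⟨π₂, -, h2⟩ := Finset.mem_image.mp hb
    have hsub : Subsingleton (Equiv.Perm (Fin 0)) := by
      constructor; intro x y; ext i; exact absurd i.2 (by omega)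
    rw [Subsingleton.elim π₁ π₂] at h1
    omega
  have hne : Nonempty (Fin n) := ⟨⟨0, hn⟩⟩
  obtain ⟨w, hw⟩ := G.exists_minimal_degree_vertex
  -- the set of edges touched by a swap with w
  have touch_card : ∀ x : Fin n,
      (G.edgeFinset.filter (fun e => w ∈ e ∨ x ∈ e)).card ≤ D := by
    intro x
    have h1 : G.edgeFinset.filter (fun e => w ∈ e ∨ x ∈ e) ⊆
        G.incidenceFinset w ∪ G.incidenceFinset x := by
      intro e he
      simp only [Finset.mem_filter] at he
      rw [G.incidenceFinset_eq_filter, G.incidenceFinset_eq_filter]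
      rcases he.2 with h | h
      · exact Finset.mem_union_left _ (Finset.mem_filter.mpr ⟨he.1, h⟩)
      · exact Finset.mem_union_right _ (Finset.mem_filter.mpr ⟨he.1, h⟩)
    calc (G.edgeFinset.filter (fun e => w ∈ e ∨ x ∈ e)).card
        ≤ (G.incidenceFinset w ∪ G.incidenceFinset x).card := Finset.card_le_card h1
      _ ≤ (G.incidenceFinset w).card + (G.incidenceFinset x).card := Finset.card_union_le _ _
      _ = G.degree w + G.degree x := by
          rw [G.card_incidenceFinset_eq_degree, G.card_incidenceFinset_eq_degree]
      _ ≤ G.maxDegree + G.minDegree := by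
          have h2 := G.degree_le_maxDegree x
          omega
  -- swapping with w moves edges only on touched edges
  have hfix : ∀ (x : Fin n) (e : Sym2 (Fin n)), ¬ (w ∈ e ∨ x ∈ e) →
      Sym2.map (Equiv.swap w x) e = e := by
    intro x e he
    induction e with
    | _ u v =>
      push_neg at he
      simp only [Sym2.mem_iff, not_or] at he
      obtain ⟨⟨h1, h2⟩, ⟨h3, h4⟩⟩ := he
      simp [Sym2.map_pair_eq, Equiv.swap_apply_of_ne_of_ne (Ne.symm h1) (Ne.symm h3),
        Equiv.swap_apply_of_ne_of_ne (Ne.symm h2) (Ne.symm h4)]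
  have hmapmul : ∀ (π : Equiv.Perm (Fin n)) (x : Fin n) (e : Sym2 (Fin n)),
      Sym2.map (π * Equiv.swap w x) e = Sym2.map π (Sym2.map (Equiv.swap w x) e) := by
    intro π x e
    induction e with
    | _ u v => simp [Sym2.map_pair_eq]
  -- the one-swap step bound
  have hbound : ∀ (π : Equiv.Perm (Fin n)) (x : Fin n),
      f (π * Equiv.swap w x) ≤ f π + D ∧ f π ≤ f (π * Equiv.swap w x) + D := by
    intro π x
    have key : ∀ (ρ ρ' : Equiv.Perm (Fin n)),
        (∀ e ∈ G.edgeFinset, ¬ (w ∈ e ∨ x ∈ e) →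
          (c (Sym2.map ρ e) = 1 ↔ c (Sym2.map ρ' e) = 1)) →
        f ρ ≤ f ρ' + D := by
      intro ρ ρ' hagree
      have hsub : G.edgeFinset.filter (fun e => c (Sym2.map ρ e) = 1) ⊆
          G.edgeFinset.filter (fun e => c (Sym2.map ρ' e) = 1) ∪
          G.edgeFinset.filter (fun e => w ∈ e ∨ x ∈ e) := by
        intro e he
        simp only [Finset.mem_filter] at he
        by_cases ht : w ∈ e ∨ x ∈ e
        · exact Finset.mem_union_right _ (Finset.mem_filter.mpr ⟨he.1, ht⟩)
        · exact Finset.mem_union_left _ (Finset.mem_filter.mpr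
            ⟨he.1, (hagree e he.1 ht).mp he.2⟩)
      calc f ρ ≤ (G.edgeFinset.filter (fun e => c (Sym2.map ρ' e) = 1) ∪
              G.edgeFinset.filter (fun e => w ∈ e ∨ x ∈ e)).card := Finset.card_le_card hsub
        _ ≤ f ρ' + (G.edgeFinset.filter (fun e => w ∈ e ∨ x ∈ e)).card :=
              Finset.card_union_le _ _
        _ ≤ f ρ' + D := by have := touch_card x; omega
    have hagree : ∀ e ∈ G.edgeFinset, ¬ (w ∈ e ∨ x ∈ e) →
        (c (Sym2.map (π * Equiv.swap w x) e) = 1 ↔ c (Sym2.map π e) = 1) := by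
      intro e _ ht
      rw [hmapmul, hfix x e ht]
    exact ⟨key _ _ hagree, key _ _ (fun e he ht => (hagree e he ht).symm)⟩
  -- membership of values
  have hmem : ∀ π : Equiv.Perm (Fin n),
      f π ∈ Finset.univ.image (fun π : Equiv.Perm (Fin n) =>
        (G.edgeFinset.filter (fun e => c (Sym2.map π e) = 1)).card) :=
    fun π => Finset.mem_image.mpr ⟨π, Finset.mem_univ _, rfl⟩
  -- single w-swap step for the reachability argument
  have hstep : ∀ (π : Equiv.Perm (Fin n)) (x : Fin n), f π ≤ a →
      f (π * Equiv.swap w x) ≤ a ∨ b - a ≤ D := by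
    intro π x hπ
    by_cases h : f (π * Equiv.swap w x) ≤ a
    · exact Or.inl h
    · right
      have h2 := hconsec _ (hmem (π * Equiv.swap w x))
      have h3 := (hbound π x).1
      omega
  -- arbitrary swap step
  have hstep2 : ∀ (π : Equiv.Perm (Fin n)) (x y : Fin n), f π ≤ a →
      f (π * Equiv.swap x y) ≤ a ∨ b - a ≤ D := by
    intro π x y hπ
    by_cases hxy : x = y
    · subst hxy; rw [Equiv.swap_self]
      left; simpa [Equiv.Perm.mul_refl] using hπ
    by_cases hxw : x = w
    · subst hxw; exact hstep π y hπ
    by_cases hyw : y = w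
    · subst hyw; rw [Equiv.swap_comm]; exact hstep π x hπ
    -- swap x y = swap y x = swap w y * swap w x * swap w y
    have hdec : Equiv.swap x y = Equiv.swap w y * Equiv.swap w x * Equiv.swap w y := by
      rw [Equiv.swap_comm x y, Equiv.swap_comm w x]
      exact (Equiv.swap_mul_swap_mul_swap hxw hxy).symm
    rw [hdec, ← mul_assoc, ← mul_assoc]
    rcases hstep π y hπ with h1 | h1
    · rcases hstep _ x h1 with h2 | h2
      · exact hstep _ y h2
      · exact Or.inr h2
    · exact Or.inr h1
  -- reachability: apply any permutation on the right
  have hreach : ∀ (π : Equiv.Perm (Fin n)) (g : Equiv.Perm (Fin n)), f π ≤ a →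
      f (π * g) ≤ a ∨ b - a ≤ D := by
    intro π g
    refine Equiv.Perm.swap_induction_on' g ?_ ?_
    · intro h; left; simpa using h
    · intro g x y hxy ih h
      rcases ih h with h1 | h1
      · rw [← mul_assoc]; exact hstep2 _ x y h1
      · exact Or.inr h1
  obtain ⟨π₁, -, h1⟩ := Finset.mem_image.mp ha
  obtain ⟨π₂, -, h2⟩ := Finset.mem_image.mp hb
  have h3 : π₁ * (π₁⁻¹ * π₂) = π₂ := by group
  rcases hreach π₁ (π₁⁻¹ * π₂) (le_of_eq h1) with h4 | h4
  · rw [h3, h2] at h4; omega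
  · exact h4
end

section
/- Let $K$ be the complete graph on $[n]$, $c : E(K) \to \{-1,+1\}$ with exactly $d\binom{n}{2}$ edges labeled $+1$, and $G$ a spanning subgraph of $K$. Then there exists a permutation $\pi \in S_n$ with $|m^+(G_\pi) - d \cdot m(G)| \le \Delta(G)$. -/
open Finset

section Aux

variable {n : ℕ}

/-- There is a permutation sending an unordered pair to any other unordered pair. -/
lemma aux_exists_perm_pair (a b x y : Fin n) (hab : a ≠ b) (hxy : x ≠ y) :
    ∃ σ : Equiv.Perm (Fin n), σ a = x ∧ σ b = y := by
  refine ⟨Equiv.swap (Equiv.swap a x b) y * Equiv.swap a x, ?_, ?_⟩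
  · have hx : Equiv.swap a x b ≠ x := by
      rcases eq_or_ne b x with rfl | hbx
      · rw [Equiv.swap_apply_right]; exact hab
      · rw [Equiv.swap_apply_of_ne_of_ne (Ne.symm hab) hbx]; exact hbx
    simp only [Equiv.Perm.mul_apply, Equiv.swap_apply_left]
    exact Equiv.swap_apply_of_ne_of_ne (Ne.symm hx) hxy
  · simp only [Equiv.Perm.mul_apply]
    exact Equiv.swap_apply_left _ _

lemma aux_map_swap_fix {x y : Fin n} {z : Sym2 (Fin n)} (hx : x ∉ z) (hy : y ∉ z) :
    Sym2.map (Equiv.swap x y) z = z := by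
  induction z using Sym2.ind with
  | _ u v =>
    rw [Sym2.mem_iff] at hx hy
    push_neg at hx hy
    rw [Sym2.map_pair_eq,
      Equiv.swap_apply_of_ne_of_ne (Ne.symm hx.1) (Ne.symm hy.1),
      Equiv.swap_apply_of_ne_of_ne (Ne.symm hx.2) (Ne.symm hy.2)]

end Aux

section Aux2

variable {n : ℕ}

lemma aux_exists_map (e e' : Sym2 (Fin n)) (he : ¬e.IsDiag) (he' : ¬e'.IsDiag) :
    ∃ σ : Equiv.Perm (Fin n), Sym2.map σ e = e' := by
  induction e using Sym2.ind with | _ a b =>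
  induction e' using Sym2.ind with | _ x y =>
  rw [Sym2.mk_isDiag_iff] at he he'
  obtain ⟨σ, h1, h2⟩ := aux_exists_perm_pair a b x y he he'
  exact ⟨σ, by rw [Sym2.map_pair_eq, h1, h2]⟩

/-- number of permutations sending `e` to a `+1`-edge -/
def auxCount (c : Sym2 (Fin n) → ℤ) (e : Sym2 (Fin n)) : ℕ :=
  #(univ.filter fun π : Equiv.Perm (Fin n) => c (Sym2.map π e) = 1)

lemma aux_count_const (c : Sym2 (Fin n) → ℤ) (e e' : Sym2 (Fin n))
    (he : ¬e.IsDiag) (he' : ¬e'.IsDiag) : auxCount c e = auxCount c e' := by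
  obtain ⟨σ, hσ⟩ := aux_exists_map e e' he he'
  have hσ' : Sym2.map (⇑σ⁻¹) e' = e := by
    rw [← hσ, Sym2.map_map]; simp
  unfold auxCount
  refine Finset.card_bij' (fun π _ => π * σ⁻¹) (fun π _ => π * σ) ?_ ?_ ?_ ?_
  · intro π hπ
    simp only [mem_filter, mem_univ, true_and] at hπ ⊢
    rwa [Equiv.Perm.coe_mul, ← Sym2.map_map, hσ']
  · intro π hπ
    simp only [mem_filter, mem_univ, true_and] at hπ ⊢
    rwa [Equiv.Perm.coe_mul, ← Sym2.map_map, hσ]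
  · intro π _; simp [mul_assoc]
  · intro π _; simp [mul_assoc]

lemma aux_count_key (c : Sym2 (Fin n) → ℤ) (e : Sym2 (Fin n)) (he : ¬e.IsDiag) :
    auxCount c e * n.choose 2 =
      Fintype.card (Equiv.Perm (Fin n)) *
        #(univ.filter fun e' : Sym2 (Fin n) => ¬ e'.IsDiag ∧ c e' = 1) := by
  classical
  set ND : Finset (Sym2 (Fin n)) := univ.filter (fun e' => ¬ e'.IsDiag) with hNDdef
  have hND : #ND = n.choose 2 := by
    rw [hNDdef, ← Fintype.card_subtype, Sym2.card_subtype_not_diag, Fintype.card_fin]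
  have h1 : ∑ e' ∈ ND, auxCount c e' = auxCount c e * n.choose 2 := by
    rw [Finset.sum_congr rfl (fun e' h => aux_count_const c e' e
      (by simp only [hNDdef, mem_filter] at h; exact h.2) he)]
    rw [Finset.sum_const, hND, smul_eq_mul, mul_comm]
  have h2 : ∑ e' ∈ ND, auxCount c e' =
      Fintype.card (Equiv.Perm (Fin n)) *
        #(univ.filter fun e' : Sym2 (Fin n) => ¬ e'.IsDiag ∧ c e' = 1) := by
    have hfib : ∀ π : Equiv.Perm (Fin n),
        (∑ e' ∈ ND, if c (Sym2.map π e') = 1 then 1 else 0) =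
          #(univ.filter fun e' : Sym2 (Fin n) => ¬ e'.IsDiag ∧ c e' = 1) := by
      intro π
      rw [← Finset.card_filter]
      refine Finset.card_bij' (fun e' _ => Sym2.map π e') (fun e' _ => Sym2.map (⇑π⁻¹) e')
        ?_ ?_ ?_ ?_
      · intro e' h
        simp only [hNDdef, mem_filter, mem_univ, true_and] at h ⊢
        exact ⟨by rw [Sym2.isDiag_map π.injective]; exact h.1, h.2⟩
      · intro e' h
        simp only [hNDdef, mem_filter, mem_univ, true_and] at h ⊢
        constructor
        · rw [Sym2.isDiag_map π⁻¹.injective]; exact h.1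
        · rw [Sym2.map_map]; simpa using h.2
      · intro e' _
        show Sym2.map (⇑π⁻¹) (Sym2.map (⇑π) e') = e'
        rw [Sym2.map_map]; simp
      · intro e' _
        show Sym2.map (⇑π) (Sym2.map (⇑π⁻¹) e') = e'
        rw [Sym2.map_map]; simp
    have hc : ∀ e'' : Sym2 (Fin n), auxCount c e'' =
        ∑ π : Equiv.Perm (Fin n), if c (Sym2.map (⇑π) e'') = 1 then 1 else 0 :=
      fun e'' => Finset.card_filter _ _
    rw [Finset.sum_congr rfl fun e'' _ => hc e'', Finset.sum_comm,
      Finset.sum_congr rfl (fun π _ => hfib π), Finset.sum_const, Finset.card_univ, smul_eq_mul]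
  rw [← h1, h2]

end Aux2

section Aux3

variable {n : ℕ}

lemma aux_step (c : Sym2 (Fin n) → ℤ) (G : SimpleGraph (Fin n)) [DecidableRel G.Adj]
    (π : Equiv.Perm (Fin n)) (x y : Fin n) :
    |((G.edgeFinset.filter (fun e => c (Sym2.map (⇑(Equiv.swap x y * π)) e) = 1)).card : ℚ)
      - ((G.edgeFinset.filter (fun e => c (Sym2.map (⇑π) e) = 1)).card : ℚ)|
      ≤ 2 * (G.maxDegree : ℚ) := by
  classical
  set A := G.edgeFinset.filter (fun e => c (Sym2.map (⇑(Equiv.swap x y * π)) e) = 1) with hA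
  set B := G.edgeFinset.filter (fun e => c (Sym2.map (⇑π) e) = 1) with hB
  set T := G.edgeFinset.filter (fun e => π⁻¹ x ∈ e ∨ π⁻¹ y ∈ e) with hT
  have hcond : ∀ e ∈ G.edgeFinset, ¬(π⁻¹ x ∈ e ∨ π⁻¹ y ∈ e) →
      Sym2.map (⇑(Equiv.swap x y * π)) e = Sym2.map (⇑π) e := by
    intro e _ hmem
    push_neg at hmem
    have hx : x ∉ Sym2.map (⇑π) e := by
      rw [Sym2.mem_map]; rintro ⟨a, ha, rfl⟩
      exact hmem.1 (by simpa using ha)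
    have hy : y ∉ Sym2.map (⇑π) e := by
      rw [Sym2.mem_map]; rintro ⟨a, ha, rfl⟩
      exact hmem.2 (by simpa using ha)
    rw [Equiv.Perm.coe_mul, ← Sym2.map_map, aux_map_swap_fix hx hy]
  have hAT : A \ B ⊆ T := by
    intro e he
    rw [Finset.mem_sdiff] at he
    rw [hA, mem_filter] at he
    rw [hT, mem_filter]
    refine ⟨he.1.1, ?_⟩
    by_contra hmem
    exact he.2 (by rw [hB, mem_filter]; exact ⟨he.1.1, by rw [← hcond e he.1.1 hmem]; exact he.1.2⟩)
  have hBT : B \ A ⊆ T := by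
    intro e he
    rw [Finset.mem_sdiff] at he
    rw [hB, mem_filter] at he
    rw [hT, mem_filter]
    refine ⟨he.1.1, ?_⟩
    by_contra hmem
    exact he.2 (by rw [hA, mem_filter]; exact ⟨he.1.1, by rw [hcond e he.1.1 hmem]; exact he.1.2⟩)
  have hcard1 : #A ≤ #B + #T := by
    rw [← Finset.card_inter_add_card_sdiff A B]
    exact add_le_add (Finset.card_le_card Finset.inter_subset_right) (Finset.card_le_card hAT)
  have hcard2 : #B ≤ #A + #T := by
    rw [← Finset.card_inter_add_card_sdiff B A]
    exact add_le_add (Finset.card_le_card Finset.inter_subset_right) (Finset.card_le_card hBT)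
  have hTdeg : #T ≤ 2 * G.maxDegree := by
    have hsub : T ⊆ G.incidenceFinset (π⁻¹ x) ∪ G.incidenceFinset (π⁻¹ y) := by
      intro e he
      rw [hT, mem_filter, SimpleGraph.mem_edgeFinset] at he
      rw [Finset.mem_union, SimpleGraph.mem_incidenceFinset, SimpleGraph.mem_incidenceFinset]
      rcases he.2 with h | h
      · exact Or.inl ⟨he.1, h⟩
      · exact Or.inr ⟨he.1, h⟩
    calc #T ≤ #(G.incidenceFinset (π⁻¹ x) ∪ G.incidenceFinset (π⁻¹ y)) :=
          Finset.card_le_card hsub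
      _ ≤ #(G.incidenceFinset (π⁻¹ x)) + #(G.incidenceFinset (π⁻¹ y)) :=
          Finset.card_union_le _ _
      _ = G.degree (π⁻¹ x) + G.degree (π⁻¹ y) := by
          rw [SimpleGraph.card_incidenceFinset_eq_degree, SimpleGraph.card_incidenceFinset_eq_degree]
      _ ≤ 2 * G.maxDegree := by
          have := G.degree_le_maxDegree (π⁻¹ x)
          have := G.degree_le_maxDegree (π⁻¹ y)
          omega
  have h1 : (#A : ℚ) ≤ #B + #T := by exact_mod_cast hcard1
  have h2 : (#B : ℚ) ≤ #A + #T := by exact_mod_cast hcard2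
  have h3 : (#T : ℚ) ≤ 2 * G.maxDegree := by exact_mod_cast hTdeg
  rw [abs_sub_le_iff]
  constructor <;> linarith

end Aux3

lemma aux_cast {α : Type*} (s : Finset α) (p : α → Prop) [DecidablePred p] :
    ((s.filter p).card : ℚ) = ∑ e ∈ s, if p e then (1:ℚ) else 0 := by
  rw [Finset.card_filter, Nat.cast_sum]
  exact Finset.sum_congr rfl fun e _ => by split <;> simp

/-- There is a permutation π with |m⁺(G_π) − d·m(G)| ≤ Δ(G). -/
theorem stmt_2 (n : ℕ) (d : ℚ) (c : Sym2 (Fin n) → ℤ)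
    (hc : ∀ e : Sym2 (Fin n), ¬ e.IsDiag → c e = 1 ∨ c e = -1)
    (hd : ((Finset.univ.filter (fun e : Sym2 (Fin n) => ¬ e.IsDiag ∧ c e = 1)).card : ℚ)
      = d * (n.choose 2))
    (G : SimpleGraph (Fin n)) [DecidableRel G.Adj] :
    ∃ π : Equiv.Perm (Fin n),
      |((G.edgeFinset.filter (fun e => c (Sym2.map π e) = 1)).card : ℚ)
          - d * (G.edgeFinset.card : ℚ)| ≤ (G.maxDegree : ℚ) := by
  classical
  by_cases hE : G.edgeFinset = ∅
  · refine ⟨1, ?_⟩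
    simp [hE]
  set f : Equiv.Perm (Fin n) → ℕ :=
    fun π => #(G.edgeFinset.filter (fun e => c (Sym2.map (⇑π) e) = 1)) with hf
  set M : ℚ := d * (G.edgeFinset.card : ℚ) with hM
  obtain ⟨e₀, he₀⟩ := Finset.nonempty_iff_ne_empty.mpr hE
  have he₀d : ¬ e₀.IsDiag :=
    G.not_isDiag_of_mem_edgeSet (SimpleGraph.mem_edgeFinset.mp he₀)
  have hn2 : 1 < n := by
    induction e₀ using Sym2.ind with | _ a b =>
    rw [Sym2.mk_isDiag_iff] at he₀d
    have : 1 < Fintype.card (Fin n) := Fintype.one_lt_card_iff_nontrivial.mpr ⟨a, b, he₀d⟩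
    simpa using this
  have hchoose : (0:ℚ) < (n.choose 2 : ℚ) := by
    have : 0 < n.choose 2 := Nat.choose_pos (by omega)
    exact_mod_cast this
  have hcount : ∀ e ∈ G.edgeFinset,
      (auxCount c e : ℚ) = (Fintype.card (Equiv.Perm (Fin n)) : ℚ) * d := by
    intro e he
    have hkey := aux_count_key c e
      (G.not_isDiag_of_mem_edgeSet (SimpleGraph.mem_edgeFinset.mp he))
    have hq : (auxCount c e : ℚ) * (n.choose 2 : ℚ) =
        (Fintype.card (Equiv.Perm (Fin n)) : ℚ) *
          ((Finset.univ.filter (fun e' : Sym2 (Fin n) => ¬ e'.IsDiag ∧ c e' = 1)).card : ℚ) := by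
      exact_mod_cast congrArg (Nat.cast : ℕ → ℚ) hkey
    rw [hd] at hq
    have := mul_right_cancel₀ (ne_of_gt hchoose) (by linarith [hq] : (auxCount c e : ℚ) * (n.choose 2 : ℚ) = ((Fintype.card (Equiv.Perm (Fin n)) : ℚ) * d) * (n.choose 2 : ℚ))
    exact this
  have hsum : ∑ π : Equiv.Perm (Fin n), (f π : ℚ) = ∑ _π : Equiv.Perm (Fin n), M := by
    calc ∑ π : Equiv.Perm (Fin n), (f π : ℚ)
        = ∑ π : Equiv.Perm (Fin n), ∑ e ∈ G.edgeFinset,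
            if c (Sym2.map (⇑π) e) = 1 then (1:ℚ) else 0 :=
          Finset.sum_congr rfl fun π _ => aux_cast _ _
      _ = ∑ e ∈ G.edgeFinset, ∑ π : Equiv.Perm (Fin n),
            if c (Sym2.map (⇑π) e) = 1 then (1:ℚ) else 0 := Finset.sum_comm
      _ = ∑ e ∈ G.edgeFinset, (auxCount c e : ℚ) :=
          Finset.sum_congr rfl fun e _ => by rw [auxCount, aux_cast]
      _ = ∑ e ∈ G.edgeFinset, (Fintype.card (Equiv.Perm (Fin n)) : ℚ) * d :=
          Finset.sum_congr rfl hcount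
      _ = (G.edgeFinset.card : ℚ) * ((Fintype.card (Equiv.Perm (Fin n)) : ℚ) * d) := by
          rw [Finset.sum_const, nsmul_eq_mul]
      _ = ∑ _π : Equiv.Perm (Fin n), M := by
          rw [Finset.sum_const, Finset.card_univ, nsmul_eq_mul, hM]; ring
  have hne : (Finset.univ : Finset (Equiv.Perm (Fin n))).Nonempty := Finset.univ_nonempty
  obtain ⟨π₁, -, hπ₁⟩ := Finset.exists_le_of_sum_le (f := fun π => (f π : ℚ))
    (g := fun _ => M) hne (le_of_eq hsum)
  obtain ⟨π₂, -, hπ₂⟩ := Finset.exists_le_of_sum_le (f := fun _ => M)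
    (g := fun π => (f π : ℚ)) hne (le_of_eq hsum.symm)
  have key : ∀ ρ : Equiv.Perm (Fin n), M ≤ (f (ρ * π₁) : ℚ) →
      ∃ π : Equiv.Perm (Fin n), |((f π : ℚ)) - M| ≤ (G.maxDegree : ℚ) := by
    intro ρ
    refine Equiv.Perm.swap_induction_on ρ ?_ ?_
    · intro h1
      refine ⟨π₁, ?_⟩
      rw [one_mul] at h1
      rw [le_antisymm hπ₁ h1, sub_self, abs_zero]
      positivity
    · intro ρ x y hxy ih h1
      by_cases hle : M ≤ (f (ρ * π₁) : ℚ)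
      · exact ih hle
      push_neg at hle
      have hstep := aux_step c G (ρ * π₁) x y
      rw [mul_assoc] at h1
      by_cases hc2 : (f (Equiv.swap x y * (ρ * π₁)) : ℚ) - M ≤ (G.maxDegree : ℚ)
      · exact ⟨Equiv.swap x y * (ρ * π₁), by rw [abs_of_nonneg (by linarith)]; exact hc2⟩
      · push_neg at hc2
        refine ⟨ρ * π₁, ?_⟩
        rw [abs_of_nonpos (by linarith)]
        have habs' : (f (Equiv.swap x y * (ρ * π₁)) : ℚ) - (f (ρ * π₁) : ℚ)
            ≤ 2 * (G.maxDegree : ℚ) := (abs_le.mp hstep).2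
        linarith
  obtain ⟨π, hπ⟩ := key (π₂ * π₁⁻¹) (by rwa [inv_mul_cancel_right])
  exact ⟨π, hπ⟩
end

section
/- Let $G$ be a graph of order $n$, size $m$, and matching number $\nu$. If $m \le \frac{8n^2 - 14n + 3}{25}$ then $\nu \ge n - \frac{1}{2} - \sqrt{n^2 - 2m - n + \frac{1}{4}}$, and otherwise $\nu \ge \frac{1}{4}\left(\sqrt{8m+1} - 1\right)$. -/
set_option linter.unusedSectionVars false
set_option linter.unusedVariables false
set_option maxHeartbeats 2000000

open Finset Real

namespace EGaux

variable {V : Type*} [Fintype V] [DecidableEq V]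

lemma sym2exists {α : Type*} (e : Sym2 α) : ∃ a b, e = s(a,b) := by
  induction e using Sym2.inductionOn with
  | hf a b => exact ⟨a, b, rfl⟩

/-- Matching as a finset of pairwise-disjoint edges. -/
def IsMF (G : SimpleGraph V) (M : Finset (Sym2 V)) : Prop :=
  (∀ e ∈ M, e ∈ G.edgeSet) ∧
    (∀ e ∈ M, ∀ f ∈ M, e ≠ f → ∀ v : V, ¬ (v ∈ e ∧ v ∈ f))

/-- Vertex covered by a matching. -/
def Cov (M : Finset (Sym2 V)) (v : V) : Prop := ∃ e ∈ M, v ∈ e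

lemma isMF_empty (G : SimpleGraph V) : IsMF G (∅ : Finset (Sym2 V)) := by
  constructor <;> simp

open scoped Classical in
/-- Matching number. -/
noncomputable def nu (G : SimpleGraph V) : ℕ :=
  ((Finset.univ : Finset (Finset (Sym2 V))).filter (IsMF G)).sup Finset.card

lemma card_le_nu {G : SimpleGraph V} {M : Finset (Sym2 V)} (h : IsMF G M) :
    M.card ≤ nu G := by
  classical
  unfold nu
  exact Finset.le_sup (Finset.mem_filter.mpr ⟨Finset.mem_univ M, h⟩)

lemma exists_nu_matching (G : SimpleGraph V) :
    ∃ M : Finset (Sym2 V), IsMF G M ∧ M.card = nu G := by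
  classical
  have hne : ((Finset.univ : Finset (Finset (Sym2 V))).filter (IsMF G)).Nonempty :=
    ⟨∅, Finset.mem_filter.mpr ⟨Finset.mem_univ _, isMF_empty G⟩⟩
  obtain ⟨M, hM, hsup⟩ := Finset.exists_mem_eq_sup _ hne Finset.card
  refine ⟨M, ?_, ?_⟩
  · exact (Finset.mem_filter.mp hM).2
  · unfold nu
    convert hsup.symm using 2

lemma eq_of_cov {G : SimpleGraph V} {M : Finset (Sym2 V)} (h : IsMF G M)
    {e f : Sym2 V} {v : V} (he : e ∈ M) (hv : v ∈ e) (hf : f ∈ M)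
    (hvf : v ∈ f) : e = f := by
  by_contra hne
  exact h.2 e he f hf hne v ⟨hv, hvf⟩

/-- Two distinct unmatched vertices of a maximum matching cannot be adjacent. -/
lemma no_adj_missed {G : SimpleGraph V} {M : Finset (Sym2 V)} (hM : IsMF G M)
    (hmax : M.card = nu G) {u w : V} (hadj : G.Adj u w)
    (hu : ¬ Cov M u) (hw : ¬ Cov M w) : False := by
  have hne : s(u, w) ∉ M := fun h => hu ⟨_, h, by simp⟩
  have hM' : IsMF G (insert s(u, w) M) := by
    constructor
    · intro e he
      rcases Finset.mem_insert.mp he with rfl | he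
      · exact hadj
      · exact hM.1 e he
    · intro e he f hf hef v hv
      rcases Finset.mem_insert.mp he with he' | he'
      · subst he'
        rcases Finset.mem_insert.mp hf with hf' | hf'
        · exact hef hf'.symm
        · rcases Sym2.mem_iff.mp hv.1 with rfl | rfl
          · exact hu ⟨f, hf', hv.2⟩
          · exact hw ⟨f, hf', hv.2⟩
      · rcases Finset.mem_insert.mp hf with hf' | hf'
        · subst hf'
          rcases Sym2.mem_iff.mp hv.2 with rfl | rfl
          · exact hu ⟨e, he', hv.1⟩
          · exact hw ⟨e, he', hv.1⟩
        · exact hM.2 e he' f hf' hef v hv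
  have := card_le_nu hM'
  rw [Finset.card_insert_of_notMem hne, hmax] at this
  omega


lemma isMF_subset {G : SimpleGraph V} {M M' : Finset (Sym2 V)} (hsub : M' ⊆ M)
    (h : IsMF G M) : IsMF G M' :=
  ⟨fun e he => h.1 e (hsub he), fun e he f hf => h.2 e (hsub he) f (hsub hf)⟩

section Part2
variable (G : SimpleGraph V) [DecidableRel G.Adj]

/-- Non-isolated vertices. -/
def supFin : Finset V := Finset.univ.filter (fun v => ∃ w, G.Adj v w)

variable {G}

lemma mem_supFin {v : V} : v ∈ supFin G ↔ ∃ w, G.Adj v w := by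
  simp [supFin]

open scoped Classical in
/-- The finset of covered vertices. -/
noncomputable def covFin (M : Finset (Sym2 V)) : Finset V :=
  Finset.univ.filter (Cov M)

lemma mem_covFin {M : Finset (Sym2 V)} {v : V} : v ∈ covFin M ↔ Cov M v := by
  classical
  rw [covFin]
  constructor
  · intro h
    exact (Finset.mem_filter.mp h).2
  · intro h
    exact Finset.mem_filter.mpr ⟨Finset.mem_univ _, h⟩

lemma card_covFin {M : Finset (Sym2 V)} (h : IsMF G M) :
    (covFin M).card = 2 * M.card := by
  classical
  induction M using Finset.induction_on with
  | empty =>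
    have : covFin (∅ : Finset (Sym2 V)) = ∅ := by
      ext v; rw [mem_covFin]; simp [Cov]
    simp [this]
  | @insert e M henm ih =>
    have hM : IsMF G M := isMF_subset (Finset.subset_insert _ _) h
    obtain ⟨a, b, rfl⟩ := sym2exists e
    have hab : a ≠ b := by
      intro hab
      exact (G.not_isDiag_of_mem_edgeSet (h.1 _ (Finset.mem_insert_self _ _)))
        (by simp [hab])
    have hnc : ∀ v ∈ (s(a,b) : Sym2 V), ¬ Cov M v := by
      rintro v hv ⟨f, hf, hvf⟩
      exact h.2 _ (Finset.mem_insert_self _ _) f (Finset.mem_insert_of_mem hf)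
        (fun hef => henm (hef ▸ hf)) v ⟨hv, hvf⟩
    have hset : covFin (insert s(a,b) M) = insert a (insert b (covFin M)) := by
      ext v
      rw [mem_covFin, Finset.mem_insert, Finset.mem_insert, mem_covFin]
      constructor
      · rintro ⟨f, hf, hvf⟩
        rcases Finset.mem_insert.mp hf with rfl | hf
        · rcases Sym2.mem_iff.mp hvf with rfl | rfl
          · exact Or.inl rfl
          · exact Or.inr (Or.inl rfl)
        · exact Or.inr (Or.inr ⟨f, hf, hvf⟩)
      · rintro (rfl | rfl | ⟨f, hf, hvf⟩)
        · exact ⟨s(v,b), Finset.mem_insert_self _ _, by simp⟩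
        · exact ⟨s(a,v), Finset.mem_insert_self _ _, by simp⟩
        · exact ⟨f, Finset.mem_insert_of_mem hf, hvf⟩
    rw [hset, Finset.card_insert_of_notMem, Finset.card_insert_of_notMem,
      ih hM, Finset.card_insert_of_notMem henm]
    · ring
    · intro hbc
      exact hnc b (by simp) (mem_covFin.mp hbc)
    · intro hac
      rcases Finset.mem_insert.mp hac with rfl | hac
      · exact hab rfl
      · exact hnc a (by simp) (mem_covFin.mp hac)

lemma cov_mem_supFin {M : Finset (Sym2 V)} (h : IsMF G M) {v : V}
    (hv : Cov M v) : v ∈ supFin G := by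
  obtain ⟨e, he, hve⟩ := hv
  obtain ⟨w, rfl⟩ := Sym2.mem_iff_exists.mp hve
  exact mem_supFin.mpr ⟨w, (SimpleGraph.mem_edgeSet G).mp (h.1 _ he)⟩

lemma covFin_subset_supFin {M : Finset (Sym2 V)} (h : IsMF G M) :
    covFin M ⊆ supFin G := fun v hv => cov_mem_supFin h (mem_covFin.mp hv)

lemma two_card_le_supFin {M : Finset (Sym2 V)} (h : IsMF G M) :
    2 * M.card ≤ (supFin G).card := by
  rw [← card_covFin h]
  exact Finset.card_le_card (covFin_subset_supFin h)

lemma degree_le_supFin {v : V} (hv : v ∈ supFin G) :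
    G.degree v + 1 ≤ (supFin G).card := by
  have hsub : G.neighborFinset v ⊆ (supFin G).erase v := by
    intro w hw
    rw [SimpleGraph.mem_neighborFinset] at hw
    exact Finset.mem_erase.mpr ⟨(G.ne_of_adj hw).symm, mem_supFin.mpr ⟨v, hw.symm⟩⟩
  have := Finset.card_le_card hsub
  rw [SimpleGraph.card_neighborFinset_eq_degree] at this
  have h2 := Finset.card_erase_of_mem hv
  have h3 : 1 ≤ (supFin G).card := Finset.card_pos.mpr ⟨v, hv⟩
  omega

lemma twice_edges_le : 2 * G.edgeFinset.card ≤ (supFin G).card * ((supFin G).card - 1) := by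
  rw [← SimpleGraph.sum_degrees_eq_twice_card_edges]
  have hzero : ∀ v ∈ (Finset.univ : Finset V), v ∉ supFin G → G.degree v = 0 := by
    intro v _ hv
    by_contra hd
    obtain ⟨w, hw⟩ := Finset.card_pos.mp (Nat.pos_of_ne_zero hd)
    exact hv (mem_supFin.mpr ⟨w, (SimpleGraph.mem_neighborFinset _ _ _).mp hw⟩)
  rw [← Finset.sum_subset (Finset.subset_univ (supFin G)) hzero]
  calc ∑ v ∈ supFin G, G.degree v ≤ ∑ _v ∈ supFin G, ((supFin G).card - 1) := by
        apply Finset.sum_le_sum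
        intro v hv
        have := degree_le_supFin hv
        omega
    _ = (supFin G).card * ((supFin G).card - 1) := by
        rw [Finset.sum_const, smul_eq_mul]

end Part2

section Part3
variable {G : SimpleGraph V}
lemma eq_of_cov' {M : Finset (Sym2 V)} (h : IsMF G M)
    {e f : Sym2 V} {v : V} (he : e ∈ M) (hv : v ∈ e) (hf : f ∈ M)
    (hvf : v ∈ f) : e = f := by
  by_contra hne
  exact h.2 e he f hf hne v ⟨hv, hvf⟩

lemma cov_insert {M : Finset (Sym2 V)} {e : Sym2 V} {x : V} :
    Cov (insert e M) x ↔ x ∈ e ∨ Cov M x := by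
  constructor
  · rintro ⟨f, hf, hxf⟩
    rcases Finset.mem_insert.mp hf with rfl | hf
    · exact Or.inl hxf
    · exact Or.inr ⟨f, hf, hxf⟩
  · rintro (hx | ⟨f, hf, hxf⟩)
    · exact ⟨e, Finset.mem_insert_self _ _, hx⟩
    · exact ⟨f, Finset.mem_insert_of_mem hf, hxf⟩

lemma cov_erase {M : Finset (Sym2 V)} (h : IsMF G M) {e : Sym2 V} (he : e ∈ M) {x : V} :
    Cov (M.erase e) x ↔ Cov M x ∧ x ∉ e := by
  constructor
  · rintro ⟨f, hf, hxf⟩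
    have hfM := Finset.mem_of_mem_erase hf
    refine ⟨⟨f, hfM, hxf⟩, fun hxe => ?_⟩
    exact (Finset.ne_of_mem_erase hf) (eq_of_cov' h hfM hxf he hxe).symm.symm
  · rintro ⟨⟨f, hf, hxf⟩, hxe⟩
    refine ⟨f, Finset.mem_erase.mpr ⟨?_, hf⟩, hxf⟩
    rintro rfl
    exact hxe hxf

lemma isMF_insert {M : Finset (Sym2 V)} (h : IsMF G M) {e : Sym2 V}
    (he : e ∈ G.edgeSet) (hnc : ∀ v ∈ e, ¬ Cov M v) : IsMF G (insert e M) := by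
  constructor
  · intro f hf
    rcases Finset.mem_insert.mp hf with rfl | hf
    · exact he
    · exact h.1 f hf
  · intro f hf g hg hfg v hv
    rcases Finset.mem_insert.mp hf with hf' | hf'
    · subst hf'
      rcases Finset.mem_insert.mp hg with hg' | hg'
      · exact hfg hg'.symm
      · exact hnc v hv.1 ⟨g, hg', hv.2⟩
    · rcases Finset.mem_insert.mp hg with hg' | hg'
      · subst hg'
        exact hnc v hv.2 ⟨f, hf', hv.1⟩
      · exact h.2 f hf' g hg' hfg v hv

/-- Core exchange lemma: given two maximum matchings `M`, `M'` and a vertex `u`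
missed by `M` but covered by `M'`, there is a maximum matching `N` whose covered
set is that of `M'` with `u` removed and some vertex `y` (covered by `M`, missed
by `M'`) added. -/
lemma exchange :
    ∀ (t : ℕ) (M M' : Finset (Sym2 V)), (M' \ M).card = t →
    IsMF G M → IsMF G M' → M.card = nu G → M'.card = nu G →
    ∀ u : V, ¬ Cov M u → Cov M' u →
    ∃ (y : V) (N : Finset (Sym2 V)), Cov M y ∧ ¬ Cov M' y ∧ y ≠ u ∧
      IsMF G N ∧ N.card = nu G ∧ N ⊆ M ∪ M' ∧
      (∀ x, Cov N x ↔ (Cov M' x ∧ x ≠ u) ∨ x = y) := by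
  intro t
  induction t using Nat.strong_induction_on with
  | _ t ih =>
  intro M M' hcard hM hM' hMmax hM'max u hu hu'
  obtain ⟨e, heM', hue⟩ := hu'
  obtain ⟨p, hep⟩ : ∃ p, e = s(u, p) := Sym2.mem_iff_exists.mp hue
  subst hep
  have hpu : p ≠ u := by
    intro h
    exact G.not_isDiag_of_mem_edgeSet (hM'.1 _ heM') (by simp [h])
  have heM : s(u, p) ∉ M := fun h => hu ⟨_, h, by simp⟩
  -- p must be covered by M, else M ∪ {e} is a bigger matching
  have hpM : Cov M p := by
    by_contra hp
    have hbig : IsMF G (insert s(u,p) M) := by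
      refine isMF_insert hM (hM'.1 _ heM') ?_
      intro v hv
      rcases Sym2.mem_iff.mp hv with rfl | rfl
      · exact hu
      · exact hp
    have := card_le_nu hbig
    rw [Finset.card_insert_of_notMem heM, hMmax] at this
    omega
  obtain ⟨f, hfM, hpf⟩ := hpM
  obtain ⟨q, hfq⟩ : ∃ q, f = s(p, q) := Sym2.mem_iff_exists.mp hpf
  subst hfq
  have hqp : q ≠ p := by
    intro h
    exact G.not_isDiag_of_mem_edgeSet (hM.1 _ hfM) (by simp [h])
  have hqu : q ≠ u := by
    rintro rfl
    exact hu ⟨_, hfM, by simp⟩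
  have hef : s(u,p) ≠ s(p,q) := by
    rintro h
    rw [h] at heM
    exact heM hfM
  have hfM' : s(p, q) ∉ M' := by
    intro h
    exact hM'.2 _ heM' _ h hef p ⟨by simp, by simp⟩
  have hnuM : 1 ≤ nu G := by
    have := card_le_nu hM'
    have h1 : 1 ≤ M'.card := Finset.card_pos.mpr ⟨_, heM'⟩
    omega
  by_cases hq : Cov M' q
  · -- recursive case
    set M₁ : Finset (Sym2 V) := insert s(u,p) (M.erase s(p,q)) with hM₁def
    have hM₁ : IsMF G M₁ := by
      refine isMF_insert (isMF_subset (Finset.erase_subset _ _) hM) (hM'.1 _ heM') ?_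
      intro v hv
      rw [cov_erase hM hfM]
      rintro ⟨hvM, hvf⟩
      rcases Sym2.mem_iff.mp hv with rfl | rfl
      · exact hu hvM
      · exact hvf (by simp)
    have heM₁ : s(u,p) ∉ M.erase s(p,q) := fun h => heM (Finset.mem_of_mem_erase h)
    have hM₁card : M₁.card = nu G := by
      rw [hM₁def, Finset.card_insert_of_notMem heM₁, Finset.card_erase_of_mem hfM, hMmax]
      omega
    have hq₁ : ¬ Cov M₁ q := by
      rw [hM₁def, cov_insert, cov_erase hM hfM]
      rintro (hq' | ⟨_, hq'⟩)
      · rcases Sym2.mem_iff.mp hq' with rfl | rfl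
        · exact hqu rfl
        · exact hqp rfl
      · exact hq' (by simp)
    have hdiff : M' \ M₁ = (M' \ M).erase s(u,p) := by
      ext x
      simp only [Finset.mem_sdiff, Finset.mem_erase, hM₁def, Finset.mem_insert,
        Finset.mem_erase]
      constructor
      · rintro ⟨hxM', hx⟩
        refine ⟨fun h => hx (Or.inl h), hxM', fun hxM => ?_⟩
        by_cases hxf : x = s(p,q)
        · exact hfM' (hxf ▸ hxM')
        · exact hx (Or.inr ⟨hxf, hxM⟩)
      · rintro ⟨hxe, hxM', hxM⟩
        refine ⟨hxM', ?_⟩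
        rintro (h | h)
        · exact hxe h
        · exact hxM h.2
    -- apply the induction hypothesis
    have htpos : 1 ≤ t := by
      rw [← hcard]
      exact Finset.card_pos.mpr ⟨s(u,p), Finset.mem_sdiff.mpr ⟨heM', heM⟩⟩
    obtain ⟨y, N₀, hyM₁, hyM', hyq, hN₀, hN₀card, hN₀sub, hN₀cov⟩ :=
      ih (t-1) (by omega) M₁ M'
        (by rw [hdiff, Finset.card_erase_of_mem
              (Finset.mem_sdiff.mpr ⟨heM', heM⟩), hcard])
        hM₁ hM' hM₁card hM'max q hq₁ hq
    have hyu : y ≠ u := by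
      rintro rfl
      exact hyM' ⟨_, heM', by simp⟩
    have hyM : Cov M y := by
      obtain ⟨g, hg, hyg⟩ := hyM₁
      rcases Finset.mem_insert.mp hg with rfl | hg
      · rcases Sym2.mem_iff.mp hyg with rfl | rfl
        · exact absurd rfl hyu
        · exact ⟨s(y,q), hfM, by simp⟩
      · exact ⟨g, Finset.mem_of_mem_erase hg, hyg⟩
    have heN₀ : s(u,p) ∈ N₀ := by
      have hcovu : Cov N₀ u :=
        (hN₀cov u).mpr (Or.inl ⟨⟨s(u,p), heM', by simp⟩, Ne.symm hqu⟩)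
      obtain ⟨g, hgN₀, hug⟩ := hcovu
      rcases Finset.mem_union.mp (hN₀sub hgN₀) with hgM₁ | hgM'
      · rcases Finset.mem_insert.mp hgM₁ with rfl | hg
        · exact hgN₀
        · exact absurd ⟨g, Finset.mem_of_mem_erase hg, hug⟩ hu
      · rwa [eq_of_cov' hM' hgM' hug heM' (by simp : u ∈ s(u,p))] at hgN₀
    have hqN₀ : ¬ Cov N₀ q := by
      rw [hN₀cov q]
      rintro (⟨_, hqq⟩ | hqy)
      · exact hqq rfl
      · exact hyq hqy.symm
    have hfN₀e : s(p,q) ∉ N₀.erase s(u,p) := by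
      intro hf
      exact hqN₀ ⟨s(p,q), Finset.mem_of_mem_erase hf, by simp⟩
    refine ⟨y, insert s(p,q) (N₀.erase s(u,p)), hyM, hyM', hyu, ?_, ?_, ?_, ?_⟩
    · refine isMF_insert (isMF_subset (Finset.erase_subset _ _) hN₀) (hM.1 _ hfM) ?_
      intro v hv
      rw [cov_erase hN₀ heN₀]
      rintro ⟨hvN₀, hve⟩
      rcases Sym2.mem_iff.mp hv with rfl | rfl
      · exact hve (by simp)
      · exact hqN₀ hvN₀
    · rw [Finset.card_insert_of_notMem hfN₀e, Finset.card_erase_of_mem heN₀, hN₀card]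
      omega
    · intro x hx
      rcases Finset.mem_insert.mp hx with rfl | hx
      · exact Finset.mem_union_left _ hfM
      · have hxe := Finset.ne_of_mem_erase hx
        have hxN₀ := Finset.mem_of_mem_erase hx
        rcases Finset.mem_union.mp (hN₀sub hxN₀) with hxM₁ | hxM'
        · rcases Finset.mem_insert.mp hxM₁ with rfl | hxM
          · exact absurd rfl hxe
          · exact Finset.mem_union_left _ (Finset.mem_of_mem_erase hxM)
        · exact Finset.mem_union_right _ hxM'
    · intro x
      rw [cov_insert, cov_erase hN₀ heN₀, hN₀cov x]
      constructor
      · rintro (hx | ⟨(⟨hxM', hxq⟩ | rfl), hxe⟩)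
        · rcases Sym2.mem_iff.mp hx with rfl | rfl
          · exact Or.inl ⟨⟨_, heM', by simp⟩, hpu⟩
          · exact Or.inl ⟨hq, hqu⟩
        · exact Or.inl ⟨hxM', fun h => hxe (by simp [h])⟩
        · exact Or.inr rfl
      · rintro (⟨hxM', hxu⟩ | rfl)
        · by_cases hxq : x = q
          · subst hxq; exact Or.inl (by simp)
          · by_cases hxp : x = p
            · subst hxp; exact Or.inl (by simp)
            · refine Or.inr ⟨Or.inl ⟨hxM', hxq⟩, ?_⟩
              intro hxe
              rcases Sym2.mem_iff.mp hxe with rfl | rfl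
              · exact hxu rfl
              · exact hxp rfl
        · refine Or.inr ⟨Or.inr rfl, ?_⟩
          intro hye
          rcases Sym2.mem_iff.mp hye with rfl | rfl
          · exact hyu rfl
          · exact hyM' ⟨_, heM', by simp⟩
  · -- terminal case
    have hfe' : s(p,q) ∉ M'.erase s(u,p) := fun h => hfM' (Finset.mem_of_mem_erase h)
    refine ⟨q, insert s(p,q) (M'.erase s(u,p)), ⟨_, hfM, by simp⟩, hq, hqu, ?_, ?_, ?_, ?_⟩
    · refine isMF_insert (isMF_subset (Finset.erase_subset _ _) hM') (hM.1 _ hfM) ?_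
      intro v hv
      rw [cov_erase hM' heM']
      rintro ⟨hvM', hve⟩
      rcases Sym2.mem_iff.mp hv with rfl | rfl
      · exact hve (by simp)
      · exact hq hvM'
    · rw [Finset.card_insert_of_notMem hfe', Finset.card_erase_of_mem heM', hM'max]
      omega
    · intro x hx
      rcases Finset.mem_insert.mp hx with rfl | hx
      · exact Finset.mem_union_left _ hfM
      · exact Finset.mem_union_right _ (Finset.mem_of_mem_erase hx)
    · intro x
      rw [cov_insert, cov_erase hM' heM']
      constructor
      · rintro (hx | ⟨hxM', hxe⟩)
        · rcases Sym2.mem_iff.mp hx with rfl | rfl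
          · exact Or.inl ⟨⟨_, heM', by simp⟩, hpu⟩
          · exact Or.inr rfl
        · exact Or.inl ⟨hxM', fun h => hxe (by simp [h])⟩
      · rintro (⟨hxM', hxu⟩ | rfl)
        · by_cases hxp : x = p
          · subst hxp; exact Or.inl (by simp)
          · refine Or.inr ⟨hxM', ?_⟩
            intro hxe
            rcases Sym2.mem_iff.mp hxe with rfl | rfl
            · exact hxu rfl
            · exact hxp rfl
        · exact Or.inl (by simp)

end Part3

section Part4
variable {G : SimpleGraph V} [DecidableRel G.Adj]

/-- Gallai-type lemma: if the support is pairwise reachable and no vertex is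
essential, then the support has at most `2ν+1` vertices. -/
lemma gallai_bound
    (hreach : ∀ u ∈ supFin G, ∀ w ∈ supFin G, G.Reachable u w)
    (hiness : ∀ v : V, ∃ M, IsMF G M ∧ M.card = nu G ∧ ¬ Cov M v) :
    (supFin G).card ≤ 2 * nu G + 1 := by
  by_contra hbig
  push_neg at hbig
  -- the set of distances between pairs of support vertices missed by a common
  -- maximum matching
  set D : Set ℕ := {d | ∃ (M : Finset (Sym2 V)) (u w : V), IsMF G M ∧
    M.card = nu G ∧ ¬ Cov M u ∧ ¬ Cov M w ∧ u ≠ w ∧ u ∈ supFin G ∧ w ∈ supFin G ∧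
    G.dist u w = d} with hD
  have hDne : D.Nonempty := by
    obtain ⟨M, hM, hMmax⟩ := exists_nu_matching G
    have hsub := covFin_subset_supFin hM
    have hcard : (supFin G \ covFin M).card =
        (supFin G).card - 2 * M.card := by
      rw [Finset.card_sdiff_of_subset hsub, card_covFin hM]
    have h2 : 1 < (supFin G \ covFin M).card := by
      rw [hcard, hMmax]; omega
    obtain ⟨u, hu, w, hw, huw⟩ := Finset.one_lt_card.mp h2
    rw [Finset.mem_sdiff] at hu hw
    exact ⟨G.dist u w, M, u, w, hM, hMmax,
      fun hc => hu.2 (mem_covFin.mpr hc), fun hc => hw.2 (mem_covFin.mpr hc),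
      huw, hu.1, hw.1, rfl⟩
  obtain ⟨M, u, w, hM, hMmax, hu, hw, huw, husup, hwsup, hdist⟩ := Nat.sInf_mem hDne
  set d := sInf D with hd
  have hnadj : ¬ G.Adj u w := fun h => no_adj_missed hM hMmax h hu hw
  have hne0 : G.dist u w ≠ 0 := by
    intro h0
    rcases SimpleGraph.dist_eq_zero_iff_eq_or_not_reachable.mp h0 with h | h
    · exact huw h
    · exact h (hreach u husup w hwsup)
  obtain ⟨p, hp⟩ := (hreach u husup w hwsup).exists_walk_length_eq_dist
  cases p with
  | nil => exact huw rfl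
  | @cons _ z _ hadj q =>
    have hzu : z ≠ u := fun h => G.ne_of_adj hadj h.symm
    have hzsup : z ∈ supFin G := mem_supFin.mpr ⟨u, hadj.symm⟩
    have hzw : z ≠ w := by
      rintro rfl
      exact hnadj hadj
    have hqlen : q.length + 1 = G.dist u w := by
      simpa [SimpleGraph.Walk.length_cons] using hp
    have hdzw : G.dist z w < G.dist u w := by
      have := SimpleGraph.dist_le q
      omega
    have hzM : Cov M z := by
      by_contra hz
      exact no_adj_missed hM hMmax hadj hu hz
    obtain ⟨M', hM', hM'max, hzM'⟩ := hiness z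
    have huM' : Cov M' u := by
      by_contra hu'
      exact no_adj_missed hM' hM'max hadj hu' hzM'
    have hwM' : Cov M' w := by
      by_contra hw'
      have hmem : G.dist z w ∈ D :=
        ⟨M', z, w, hM', hM'max, hzM', hw', hzw, hzsup, hwsup, rfl⟩
      have := Nat.sInf_le hmem
      omega
    -- first exchange: free u
    obtain ⟨y₁, N₁, hy₁M, hy₁M', hy₁u, hN₁, hN₁max, _, hN₁cov⟩ :=
      exchange _ M M' rfl hM hM' hMmax hM'max u hu huM'
    -- second exchange: free w
    have hwN₁ : Cov N₁ w := (hN₁cov w).mpr (Or.inl ⟨hwM', huw.symm⟩)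
    obtain ⟨y₂, N₂, hy₂M, hy₂N₁, hy₂w, hN₂, hN₂max, _, hN₂cov⟩ :=
      exchange _ M N₁ rfl hM hN₁ hMmax hN₁max w hw hwN₁
    have huN₁ : ¬ Cov N₁ u := by
      rw [hN₁cov u]
      rintro (⟨_, h⟩ | h)
      · exact h rfl
      · exact hy₁u h.symm
    have huN₂ : ¬ Cov N₂ u := by
      rw [hN₂cov u]
      rintro (⟨h, _⟩ | h)
      · exact huN₁ h
      · exact hu (h ▸ hy₂M)
    have hwN₂ : ¬ Cov N₂ w := by
      rw [hN₂cov w]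
      rintro (⟨_, h⟩ | h)
      · exact h rfl
      · exact hy₂w h.symm
    by_cases hzN₂ : Cov N₂ z
    · -- third exchange: free z again
      obtain ⟨y₃, N₃, hy₃M', hy₃N₂, hy₃z, hN₃, hN₃max, _, hN₃cov⟩ :=
        exchange _ M' N₂ rfl hM' hN₂ hM'max hN₂max z hzM' hzN₂
      have hzN₃ : ¬ Cov N₃ z := by
        rw [hN₃cov z]
        rintro (⟨_, h⟩ | h)
        · exact h rfl
        · exact hy₃z h.symm
      by_cases huy₃ : u = y₃
      · -- N₃ misses w and z
        have hwN₃ : ¬ Cov N₃ w := by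
          rw [hN₃cov w]
          rintro (⟨h, _⟩ | h)
          · exact hwN₂ h
          · exact huw (huy₃.trans h.symm)
        have hmem : G.dist z w ∈ D :=
          ⟨N₃, z, w, hN₃, hN₃max, hzN₃, hwN₃, hzw, hzsup, hwsup, rfl⟩
        have := Nat.sInf_le hmem
        omega
      · -- N₃ misses u and z, but they are adjacent
        have huN₃ : ¬ Cov N₃ u := by
          rw [hN₃cov u]
          rintro (⟨h, _⟩ | h)
          · exact huN₂ h
          · exact huy₃ h
        exact no_adj_missed hN₃ hN₃max hadj huN₃ hzN₃
    · exact no_adj_missed hN₂ hN₂max hadj huN₂ hzN₂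

end Part4

lemma mem_supFin_of_edge {G : SimpleGraph V} [DecidableRel G.Adj] {e : Sym2 V} {v : V}
    (he : e ∈ G.edgeSet) (hv : v ∈ e) : v ∈ supFin G := by
  obtain ⟨w, rfl⟩ := Sym2.mem_iff_exists.mp hv
  exact mem_supFin.mpr ⟨w, (SimpleGraph.mem_edgeSet G).mp he⟩

/-! ### Deleting all edges at a vertex -/

def delV (G : SimpleGraph V) (v : V) : SimpleGraph V where
  Adj a b := G.Adj a b ∧ a ≠ v ∧ b ≠ v
  symm := ⟨by rintro a b ⟨h, ha, hb⟩; exact ⟨h.symm, hb, ha⟩⟩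
  loopless := ⟨by rintro a ⟨h, _, _⟩; exact G.irrefl h⟩

instance (G : SimpleGraph V) [DecidableRel G.Adj] (v : V) :
    DecidableRel (delV G v).Adj :=
  fun a b => inferInstanceAs (Decidable (G.Adj a b ∧ a ≠ v ∧ b ≠ v))

variable {G : SimpleGraph V} [DecidableRel G.Adj] {v : V}

lemma delV_edgeSet {e : Sym2 V} :
    e ∈ (delV G v).edgeSet ↔ e ∈ G.edgeSet ∧ v ∉ e := by
  induction e using Sym2.inductionOn with
  | hf a b =>
    rw [SimpleGraph.mem_edgeSet, SimpleGraph.mem_edgeSet]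
    show (G.Adj a b ∧ a ≠ v ∧ b ≠ v) ↔ _
    rw [Sym2.mem_iff]
    constructor
    · rintro ⟨h, ha, hb⟩
      exact ⟨h, by rintro (rfl | rfl) <;> simp_all⟩
    · rintro ⟨h, hv⟩
      push_neg at hv
      exact ⟨h, fun h' => hv.1 h'.symm, fun h' => hv.2 h'.symm⟩

lemma delV_edgeFinset :
    (delV G v).edgeFinset = G.edgeFinset.filter (fun e => v ∉ e) := by
  ext e
  rw [SimpleGraph.mem_edgeFinset, Finset.mem_filter, SimpleGraph.mem_edgeFinset,
    delV_edgeSet]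

lemma delV_card_edges :
    G.edgeFinset.card = (delV G v).edgeFinset.card + G.degree v := by
  rw [delV_edgeFinset, ← SimpleGraph.card_incidenceFinset_eq_degree,
    SimpleGraph.incidenceFinset_eq_filter]
  rw [← Finset.card_filter_add_card_filter_not
    (s := G.edgeFinset) (p := fun e => v ∈ e)]
  omega

lemma delV_supFin : supFin (delV G v) ⊆ (supFin G).erase v := by
  intro u hu
  obtain ⟨b, hb, hbu, _⟩ := mem_supFin.mp hu
  exact Finset.mem_erase.mpr ⟨hbu, mem_supFin.mpr ⟨b, hb⟩⟩

lemma isMF_of_delV {M : Finset (Sym2 V)} (h : IsMF (delV G v) M) : IsMF G M :=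
  ⟨fun e he => (delV_edgeSet.mp (h.1 e he)).1, h.2⟩

lemma isMF_delV_of_not_cov {M : Finset (Sym2 V)} (h : IsMF G M) (hv : ¬ Cov M v) :
    IsMF (delV G v) M :=
  ⟨fun e he => delV_edgeSet.mpr ⟨h.1 e he, fun hve => hv ⟨e, he, hve⟩⟩, h.2⟩

/-- A vertex is essential if every maximum matching covers it. -/
def Ess (G : SimpleGraph V) (v : V) : Prop :=
  ∀ M : Finset (Sym2 V), IsMF G M → M.card = nu G → Cov M v

lemma Ess.nu_pos (h : Ess G v) : 1 ≤ nu G := by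
  obtain ⟨M, hM, hMmax⟩ := exists_nu_matching G
  obtain ⟨e, he, _⟩ := h M hM hMmax
  have := Finset.card_pos.mpr ⟨e, he⟩
  omega

lemma Ess.mem_supFin (h : Ess G v) : v ∈ supFin G := by
  obtain ⟨M, hM, hMmax⟩ := exists_nu_matching G
  obtain ⟨e, he, hve⟩ := h M hM hMmax
  exact mem_supFin_of_edge (hM.1 e he) hve

lemma Ess.nu_delV (h : Ess G v) : nu (delV G v) + 1 = nu G := by
  have hle : nu (delV G v) + 1 ≤ nu G := by
    obtain ⟨N, hN, hNmax⟩ := exists_nu_matching (delV G v)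
    have hNG : IsMF G N := isMF_of_delV hN
    have h1 := card_le_nu hNG
    rcases Nat.lt_or_ge N.card (nu G) with hlt | hge
    · omega
    · exfalso
      obtain ⟨e, he, hve⟩ := h N hNG (le_antisymm h1 hge)
      exact (delV_edgeSet.mp (hN.1 e he)).2 hve
  have hge : nu G ≤ nu (delV G v) + 1 := by
    obtain ⟨M, hM, hMmax⟩ := exists_nu_matching G
    obtain ⟨e, he, hve⟩ := h M hM hMmax
    have hsub : IsMF (delV G v) (M.erase e) := by
      refine isMF_delV_of_not_cov (isMF_subset (Finset.erase_subset _ _) hM) ?_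
      rw [cov_erase hM he]
      rintro ⟨_, hv'⟩
      exact hv' hve
    have := card_le_nu hsub
    rw [Finset.card_erase_of_mem he, hMmax] at this
    have h1 : 1 ≤ nu G := h.nu_pos
    omega
  omega

lemma degree_pos_of_mem_supFin (hv : v ∈ supFin G) : 1 ≤ G.degree v := by
  obtain ⟨w, hw⟩ := mem_supFin.mp hv
  have : w ∈ G.neighborFinset v := (SimpleGraph.mem_neighborFinset _ _ _).mpr hw
  have := Finset.card_pos.mpr ⟨w, this⟩
  rwa [SimpleGraph.card_neighborFinset_eq_degree] at this

lemma degree_le_supFin_pred (hv : v ∈ supFin G) :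
    G.degree v + 1 ≤ (supFin G).card := by
  have hsub : G.neighborFinset v ⊆ (supFin G).erase v := by
    intro w hw
    rw [SimpleGraph.mem_neighborFinset] at hw
    exact Finset.mem_erase.mpr ⟨(G.ne_of_adj hw).symm, mem_supFin.mpr ⟨v, hw.symm⟩⟩
  have h1 := Finset.card_le_card hsub
  rw [SimpleGraph.card_neighborFinset_eq_degree] at h1
  have h2 := Finset.card_erase_of_mem hv
  have h3 : 1 ≤ (supFin G).card := Finset.card_pos.mpr ⟨v, hv⟩
  omega

/-! ### Splitting along a union of components -/

section Split
variable (G) (S : Finset V)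

def inG : SimpleGraph V where
  Adj a b := G.Adj a b ∧ (a ∈ S ∨ b ∈ S)
  symm := ⟨by rintro a b ⟨h, hs⟩; exact ⟨h.symm, hs.symm⟩⟩
  loopless := ⟨by rintro a ⟨h, _⟩; exact G.irrefl h⟩

def outG : SimpleGraph V where
  Adj a b := G.Adj a b ∧ ¬(a ∈ S ∨ b ∈ S)
  symm := ⟨by rintro a b ⟨h, hs⟩; exact ⟨h.symm, fun hc => hs hc.symm⟩⟩
  loopless := ⟨by rintro a ⟨h, _⟩; exact G.irrefl h⟩

instance : DecidableRel (inG G S).Adj :=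
  fun a b => inferInstanceAs (Decidable (G.Adj a b ∧ (a ∈ S ∨ b ∈ S)))
instance : DecidableRel (outG G S).Adj :=
  fun a b => inferInstanceAs (Decidable (G.Adj a b ∧ ¬(a ∈ S ∨ b ∈ S)))

variable {G S}

lemma inG_le : ∀ {a b : V}, (inG G S).Adj a b → G.Adj a b := fun h => h.1
lemma outG_le : ∀ {a b : V}, (outG G S).Adj a b → G.Adj a b := fun h => h.1

lemma inG_edgeSet_subset : (inG G S).edgeSet ⊆ G.edgeSet := by
  intro e
  induction e using Sym2.inductionOn with
  | hf a b => exact fun h => inG_le h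

lemma outG_edgeSet_subset : (outG G S).edgeSet ⊆ G.edgeSet := by
  intro e
  induction e using Sym2.inductionOn with
  | hf a b => exact fun h => outG_le h

lemma split_edge_disjoint : Disjoint (inG G S).edgeFinset (outG G S).edgeFinset := by
  rw [Finset.disjoint_left]
  intro e he₁ he₂
  rw [SimpleGraph.mem_edgeFinset] at he₁ he₂
  induction e using Sym2.inductionOn with
  | hf a b => exact he₂.2 he₁.2

lemma split_edge_union :
    (inG G S).edgeFinset ∪ (outG G S).edgeFinset = G.edgeFinset := by
  ext e
  rw [Finset.mem_union, SimpleGraph.mem_edgeFinset, SimpleGraph.mem_edgeFinset,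
    SimpleGraph.mem_edgeFinset]
  induction e using Sym2.inductionOn with
  | hf a b =>
    show (inG G S).Adj a b ∨ (outG G S).Adj a b ↔ G.Adj a b
    unfold inG outG
    by_cases h : a ∈ S ∨ b ∈ S <;> simp_all

lemma split_card_edges :
    G.edgeFinset.card = (inG G S).edgeFinset.card + (outG G S).edgeFinset.card := by
  rw [← split_edge_union (S := S), Finset.card_union_of_disjoint split_edge_disjoint]

variable (hS : ∀ a b, G.Adj a b → a ∈ S → b ∈ S)
include hS

lemma inG_supFin_subset : supFin (inG G S) ⊆ S := by
  intro u hu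
  obtain ⟨b, hadj, hs⟩ := mem_supFin.mp hu
  rcases hs with h | h
  · exact h
  · exact hS b u hadj.symm h

omit hS

lemma outG_supFin_disj : ∀ u ∈ supFin (outG G S), u ∉ S := by
  intro u hu hus
  obtain ⟨b, _, hs⟩ := mem_supFin.mp hu
  exact hs (Or.inl hus)

lemma split_supFin_union : supFin G = supFin (inG G S) ∪ supFin (outG G S) := by
  ext u
  rw [Finset.mem_union, mem_supFin, mem_supFin, mem_supFin]
  constructor
  · rintro ⟨b, hadj⟩
    by_cases h : u ∈ S ∨ b ∈ S
    · exact Or.inl ⟨b, hadj, h⟩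
    · exact Or.inr ⟨b, hadj, h⟩
  · rintro (⟨b, hadj, _⟩ | ⟨b, hadj, _⟩) <;> exact ⟨b, hadj⟩

include hS in
lemma split_card_supFin :
    (supFin G).card = (supFin (inG G S)).card + (supFin (outG G S)).card := by
  rw [split_supFin_union (S := S), Finset.card_union_of_disjoint]
  rw [Finset.disjoint_left]
  intro u hu₁ hu₂
  exact outG_supFin_disj u hu₂ (inG_supFin_subset hS hu₁)

end Split

lemma split_arith_AB {m₁ m₂ k₁ k₂ s₁ s₂ : ℕ} (hs₁ : 2*k₁ ≤ s₁) (hs₂ : 2*k₂ ≤ s₂)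
    (h₁ : m₁ ≤ k₁*(2*k₁+1)) (h₂ : 2*m₂ + k₂*k₂ + k₂ ≤ 2*k₂*s₂) :
    m₁+m₂ ≤ (k₁+k₂)*(2*(k₁+k₂)+1) ∨
      2*(m₁+m₂) + (k₁+k₂)*(k₁+k₂) + (k₁+k₂) ≤ 2*(k₁+k₂)*(s₁+s₂) := by
  by_cases hc : 2*s₂ ≤ 8*k₁+5*k₂+3
  · left
    have h3 : k₂*(2*s₂) ≤ k₂*(8*k₁+5*k₂+3) := Nat.mul_le_mul_left _ hc
    nlinarith [h3]
  · right
    push_neg at hc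
    have hc' : 8*k₁+5*k₂+4 ≤ 2*s₂ := hc
    have h3 : k₁*(8*k₁+5*k₂+4) ≤ k₁*(2*s₂) := Nat.mul_le_mul_left _ hc'
    have h4 : k₂*(2*k₁) ≤ k₂*s₁ := Nat.mul_le_mul_left _ hs₁
    have h5 : k₁*(2*k₁) ≤ k₁*s₁ := Nat.mul_le_mul_left _ hs₁
    nlinarith [h3, h4, h5]

lemma split_arith {m₁ m₂ k₁ k₂ s₁ s₂ : ℕ} (hs₁ : 2*k₁ ≤ s₁) (hs₂ : 2*k₂ ≤ s₂)
    (h₁ : m₁ ≤ k₁*(2*k₁+1) ∨ 2*m₁ + k₁*k₁ + k₁ ≤ 2*k₁*s₁)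
    (h₂ : m₂ ≤ k₂*(2*k₂+1) ∨ 2*m₂ + k₂*k₂ + k₂ ≤ 2*k₂*s₂) :
    m₁+m₂ ≤ (k₁+k₂)*(2*(k₁+k₂)+1) ∨
      2*(m₁+m₂) + (k₁+k₂)*(k₁+k₂) + (k₁+k₂) ≤ 2*(k₁+k₂)*(s₁+s₂) := by
  rcases h₁ with h₁ | h₁ <;> rcases h₂ with h₂ | h₂
  · left; nlinarith
  · exact split_arith_AB hs₁ hs₂ h₁ h₂
  · rcases split_arith_AB hs₂ hs₁ h₂ h₁ with h | h
    · left
      have e1 : (k₂+k₁)*(2*(k₂+k₁)+1) = (k₁+k₂)*(2*(k₁+k₂)+1) := by ring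
      omega
    · right
      have e1 : k₂ + k₁ = k₁ + k₂ := by omega
      have e2 : m₂ + m₁ = m₁ + m₂ := by omega
      have e3 : s₂ + s₁ = s₁ + s₂ := by omega
      rwa [e1, e2, e3] at h
  · right
    have h4 : k₁*(2*k₂) ≤ k₁*s₂ := Nat.mul_le_mul_left _ hs₂
    have h5 : k₂*(2*k₁) ≤ k₂*s₁ := Nat.mul_le_mul_left _ hs₁
    nlinarith [h4, h5]

lemma ess_arith {m' d s' s k' : ℕ} (hd1 : 1 ≤ d) (hds : d + 1 ≤ s) (hss : s' + 1 ≤ s)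
    (h : m' ≤ k' * (2*k'+1) ∨ 2*m' + k'*k' + k' ≤ 2*k'*s') :
    m' + d ≤ (k'+1) * (2*(k'+1)+1) ∨
      2*(m'+d) + (k'+1)*(k'+1) + (k'+1) ≤ 2*(k'+1)*s := by
  rcases h with h | h
  · by_cases hc : s ≤ 4*(k'+1)
    · left; nlinarith
    · right
      push_neg at hc
      have h3 : k'*(4*k'+5) ≤ k'*s := Nat.mul_le_mul_left _ (by omega)
      nlinarith [h3]
  · right
    have h3 : 2*k'*s' ≤ 2*k'*(s-1) := Nat.mul_le_mul_left _ (by omega)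
    have h4 : 2*k'*(s-1) + 2*k' = 2*k'*s := by
      have : s - 1 + 1 = s := by omega
      nlinarith [this]
    nlinarith [h3, h4]

lemma gallai_arith {m s k : ℕ} (hs : s ≤ 2*k+1) (hm : 2*m ≤ s*(s-1)) :
    m ≤ k*(2*k+1) := by
  have h1 : s*(s-1) ≤ (2*k+1)*(2*k) := Nat.mul_le_mul hs (by omega)
  nlinarith [h1]


section Part6
variable {G : SimpleGraph V} [DecidableRel G.Adj] {S : Finset V}

lemma split_nu (hS : ∀ a b, G.Adj a b → a ∈ S → b ∈ S) :
    nu G = nu (inG G S) + nu (outG G S) := by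
  apply le_antisymm
  · -- decompose a maximum matching of G
    obtain ⟨M, hM, hMmax⟩ := exists_nu_matching G
    set M₁ := M.filter (fun e => e ∈ (inG G S).edgeFinset) with hM₁def
    set M₂ := M.filter (fun e => ¬ e ∈ (inG G S).edgeFinset) with hM₂def
    have hM₁ : IsMF (inG G S) M₁ := by
      constructor
      · intro e he
        exact SimpleGraph.mem_edgeFinset.mp (Finset.mem_filter.mp he).2
      · intro e he f hf
        exact hM.2 e (Finset.mem_filter.mp he).1 f (Finset.mem_filter.mp hf).1
    have hM₂ : IsMF (outG G S) M₂ := by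
      constructor
      · intro e he
        obtain ⟨heM, hnin⟩ := Finset.mem_filter.mp he
        have heG : e ∈ G.edgeFinset := SimpleGraph.mem_edgeFinset.mpr (hM.1 e heM)
        rw [← split_edge_union (S := S), Finset.mem_union] at heG
        rcases heG with h | h
        · exact absurd h hnin
        · exact SimpleGraph.mem_edgeFinset.mp h
      · intro e he f hf
        exact hM.2 e (Finset.mem_filter.mp he).1 f (Finset.mem_filter.mp hf).1
    have hcards : M₁.card + M₂.card = M.card :=
      Finset.card_filter_add_card_filter_not _
    have h1 := card_le_nu hM₁
    have h2 := card_le_nu hM₂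
    omega
  · -- combine maximum matchings of the two halves
    obtain ⟨M₁, hM₁, hM₁max⟩ := exists_nu_matching (inG G S)
    obtain ⟨M₂, hM₂, hM₂max⟩ := exists_nu_matching (outG G S)
    have hdisj : Disjoint M₁ M₂ := by
      rw [Finset.disjoint_left]
      intro e he₁ he₂
      have h1 : e ∈ (inG G S).edgeFinset := SimpleGraph.mem_edgeFinset.mpr (hM₁.1 e he₁)
      have h2 : e ∈ (outG G S).edgeFinset := SimpleGraph.mem_edgeFinset.mpr (hM₂.1 e he₂)
      exact Finset.disjoint_left.mp split_edge_disjoint h1 h2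
    have hcross : ∀ e ∈ M₁, ∀ f ∈ M₂, ∀ x : V, ¬ (x ∈ e ∧ x ∈ f) := by
      rintro e he f hf x ⟨hxe, hxf⟩
      have h1 : x ∈ supFin (inG G S) := mem_supFin_of_edge (hM₁.1 e he) hxe
      have h2 : x ∈ supFin (outG G S) := mem_supFin_of_edge (hM₂.1 f hf) hxf
      exact outG_supFin_disj x h2 (inG_supFin_subset hS h1)
    have hMF : IsMF G (M₁ ∪ M₂) := by
      constructor
      · intro e he
        rcases Finset.mem_union.mp he with h | h
        · exact inG_edgeSet_subset (hM₁.1 e h)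
        · exact outG_edgeSet_subset (hM₂.1 e h)
      · intro e he f hf hef x hx
        rcases Finset.mem_union.mp he with he' | he' <;>
          rcases Finset.mem_union.mp hf with hf' | hf'
        · exact hM₁.2 e he' f hf' hef x hx
        · exact hcross e he' f hf' x hx
        · exact hcross f hf' e he' x ⟨hx.2, hx.1⟩
        · exact hM₂.2 e he' f hf' hef x hx
    have := card_le_nu hMF
    rw [Finset.card_union_of_disjoint hdisj, hM₁max, hM₂max] at this
    exact this

lemma not_ess {v : V} (h : ¬ Ess G v) :
    ∃ M, IsMF G M ∧ M.card = nu G ∧ ¬ Cov M v := by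
  by_contra hc
  push_neg at hc
  exact h hc

/-- The Erdős–Gallai bound, combinatorial core:
`m ≤ ν(2ν+1)` or `2m ≤ ν(2s-1-ν)` (written without subtraction). -/
theorem EGcore : ∀ (m : ℕ) (G : SimpleGraph V) [inst : DecidableRel G.Adj],
    G.edgeFinset.card = m →
    m ≤ nu G * (2 * nu G + 1) ∨
      2 * m + nu G * nu G + nu G ≤ 2 * nu G * (supFin G).card := by
  intro m
  induction m using Nat.strong_induction_on with
  | _ m ih =>
  intro G inst hm
  by_cases hE : G.edgeFinset = ∅
  · left
    rw [← hm, hE]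
    simp
  · -- pick a support vertex
    obtain ⟨e₀, he₀⟩ := Finset.nonempty_of_ne_empty hE
    obtain ⟨v₀, b₀, rfl⟩ := sym2exists e₀
    have hadj₀ : G.Adj v₀ b₀ := SimpleGraph.mem_edgeFinset.mp he₀
    haveI : DecidablePred (G.Reachable v₀) := Classical.decPred _
    set S : Finset V := Finset.univ.filter (G.Reachable v₀) with hSdef
    have hv₀S : v₀ ∈ S := Finset.mem_filter.mpr ⟨Finset.mem_univ _, SimpleGraph.Reachable.refl _⟩
    have hS : ∀ a b, G.Adj a b → a ∈ S → b ∈ S := by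
      intro a b hab ha
      rw [Finset.mem_filter] at ha ⊢
      exact ⟨Finset.mem_univ _, ha.2.trans hab.reachable⟩
    by_cases hout : (outG G S).edgeFinset = ∅
    · -- support is connected
      have hsupS : ∀ u ∈ supFin G, u ∈ S := by
        intro u hu
        obtain ⟨b, hb⟩ := mem_supFin.mp hu
        by_cases hmem : u ∈ S ∨ b ∈ S
        · rcases hmem with h | h
          · exact h
          · exact hS b u hb.symm h
        · exfalso
          have : s(u, b) ∈ (outG G S).edgeFinset :=
            SimpleGraph.mem_edgeFinset.mpr (by exact ⟨hb, hmem⟩)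
          rw [hout] at this
          exact absurd this (Finset.notMem_empty _)
      have hreach : ∀ u ∈ supFin G, ∀ w ∈ supFin G, G.Reachable u w := by
        intro u hu w hw
        have h1 := (Finset.mem_filter.mp (hsupS u hu)).2
        have h2 := (Finset.mem_filter.mp (hsupS w hw)).2
        exact h1.symm.trans h2
      by_cases hess : ∃ v, Ess G v
      · -- delete the incidence set of an essential vertex
        obtain ⟨v, hv⟩ := hess
        have hvsup : v ∈ supFin G := hv.mem_supFin
        have hdeg : 1 ≤ G.degree v := degree_pos_of_mem_supFin hvsup
        have hcard : G.edgeFinset.card = (delV G v).edgeFinset.card + G.degree v :=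
          delV_card_edges
        have hlt : (delV G v).edgeFinset.card < m := by omega
        have hIH := ih _ hlt (delV G v) rfl
        have hnu : nu (delV G v) + 1 = nu G := hv.nu_delV
        have hs' : (supFin (delV G v)).card + 1 ≤ (supFin G).card := by
          have h1 := Finset.card_le_card (delV_supFin (G := G) (v := v))
          have h2 := Finset.card_erase_of_mem hvsup
          have h3 : 1 ≤ (supFin G).card := Finset.card_pos.mpr ⟨v, hvsup⟩
          omega
        have hds : G.degree v + 1 ≤ (supFin G).card := degree_le_supFin_pred hvsup
        have := ess_arith hdeg hds hs' hIH
        rw [hnu] at this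
        have hmval : m = (delV G v).edgeFinset.card + G.degree v := by omega
        rw [hmval]
        exact this
      · -- no essential vertex: Gallai's situation
        push_neg at hess
        have hiness : ∀ v : V, ∃ M, IsMF G M ∧ M.card = nu G ∧ ¬ Cov M v :=
          fun v => not_ess (hess v)
        have hgal := gallai_bound hreach hiness
        left
        rw [← hm]
        exact gallai_arith hgal (twice_edges_le (G := G))
    · -- proper split
      have hm₁pos : 1 ≤ (inG G S).edgeFinset.card := by
        apply Finset.card_pos.mpr
        refine ⟨s(v₀, b₀), SimpleGraph.mem_edgeFinset.mpr ?_⟩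
        exact ⟨hadj₀, Or.inl hv₀S⟩
      have hm₂pos : 1 ≤ (outG G S).edgeFinset.card := by
        apply Finset.card_pos.mpr
        exact Finset.nonempty_of_ne_empty hout
      have hsplit : m = (inG G S).edgeFinset.card + (outG G S).edgeFinset.card := by
        rw [← hm]; exact split_card_edges
      have hIH₁ := ih _ (by omega) (inG G S) rfl
      have hIH₂ := ih _ (by omega) (outG G S) rfl
      have hs₁ : 2 * nu (inG G S) ≤ (supFin (inG G S)).card := by
        obtain ⟨N, hN, hNmax⟩ := exists_nu_matching (inG G S)
        have := two_card_le_supFin hN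
        omega
      have hs₂ : 2 * nu (outG G S) ≤ (supFin (outG G S)).card := by
        obtain ⟨N, hN, hNmax⟩ := exists_nu_matching (outG G S)
        have := two_card_le_supFin hN
        omega
      have hcomb := split_arith hs₁ hs₂ hIH₁ hIH₂
      rw [← split_nu hS, ← split_card_supFin hS] at hcomb
      rw [hsplit]
      exact hcomb
end Part6

end EGaux

/-- Erdős–Gallai lower bound on the matching number in terms of the order n and
size m of a graph: the existence of a matching of the appropriate size. -/
theorem stmt_4 {V : Type*} [Fintype V] [DecidableEq V]
    (G : SimpleGraph V) [DecidableRel G.Adj] (n m : ℕ)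
    (hn : Fintype.card V = n) (hm : G.edgeFinset.card = m) :
    (((m : ℝ) ≤ ((8 * n ^ 2 - 14 * n + 3 : ℝ)) / 25) →
      ∃ M : Finset (Sym2 V), M ⊆ G.edgeFinset ∧
        (∀ e ∈ M, ∀ f ∈ M, e ≠ f → ∀ v : V, ¬ (v ∈ e ∧ v ∈ f)) ∧
        (n : ℝ) - 1 / 2 - Real.sqrt ((n : ℝ) ^ 2 - 2 * m - n + 1 / 4) ≤ (M.card : ℝ)) ∧
    ((¬ ((m : ℝ) ≤ ((8 * n ^ 2 - 14 * n + 3 : ℝ)) / 25)) →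
      ∃ M : Finset (Sym2 V), M ⊆ G.edgeFinset ∧
        (∀ e ∈ M, ∀ f ∈ M, e ≠ f → ∀ v : V, ¬ (v ∈ e ∧ v ∈ f)) ∧
        (Real.sqrt (8 * m + 1) - 1) / 4 ≤ (M.card : ℝ)) := by
  obtain ⟨M, hM, hMcard⟩ := EGaux.exists_nu_matching G
  set k := EGaux.nu G with hk
  have hEG0 := EGaux.EGcore m G hm
  have hsn : (EGaux.supFin G).card ≤ n := by
    rw [← hn]
    exact Finset.card_le_univ _
  have h2k : 2 * k ≤ n := by
    have h1 := EGaux.two_card_le_supFin hM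
    rw [hMcard] at h1
    omega
  have hsub : M ⊆ G.edgeFinset := fun e he => SimpleGraph.mem_edgeFinset.mpr (hM.1 e he)
  have hKcast : ((M.card : ℕ) : ℝ) = (k : ℝ) := by rw [hMcard]
  have hk0 : (0:ℝ) ≤ (k:ℝ) := Nat.cast_nonneg _
  have h2kR : 2*(k:ℝ) ≤ (n:ℝ) := by exact_mod_cast h2k
  have hBR : 2 * m + k * k + k ≤ 2 * k * (EGaux.supFin G).card →
      2*(m:ℝ) + (k:ℝ)*(k:ℝ) + (k:ℝ) ≤ 2*(k:ℝ)*(n:ℝ) := by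
    intro hB
    have h := le_trans hB (Nat.mul_le_mul_left _ hsn)
    exact_mod_cast h
  constructor
  · intro hle
    refine ⟨M, hsub, hM.2, ?_⟩
    rw [hKcast]
    have key : 2*(m:ℝ) ≤ (k:ℝ)*(2*(n:ℝ) - 1 - (k:ℝ)) := by
      rcases hEG0 with hA | hB
      · have hAR : (m:ℝ) ≤ (k:ℝ)*(2*(k:ℝ)+1) := by exact_mod_cast hA
        rcases le_or_gt (2*(n:ℝ)) (5*(k:ℝ)+3) with h5 | h5
        · by_cases hk1 : k = 0
          · have hmz : m = 0 := by
              rw [← hk, hk1] at hA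
              simp at hA
              omega
            rw [hk1, hmz]
            norm_num
          · have hk1R : (1:ℝ) ≤ (k:ℝ) := by
              exact_mod_cast Nat.one_le_iff_ne_zero.mpr hk1
            have f1 : (0:ℝ) ≤ 5*(k:ℝ) - (2*(n:ℝ)-3) := by linarith
            have f2 : (0:ℝ) ≤ (8*(n:ℝ)-2) - 5*(k:ℝ) := by linarith
            nlinarith [mul_nonneg f1 f2, hle]
        · nlinarith [mul_nonneg hk0 (by linarith : (0:ℝ) ≤ 2*(n:ℝ)-3-5*(k:ℝ)), hAR]
      · nlinarith [hBR hB]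
    have hsq : ((n:ℝ) - 1/2 - (k:ℝ))^2 ≤ (n:ℝ)^2 - 2*(m:ℝ) - (n:ℝ) + 1/4 := by
      nlinarith [key]
    have hsqrt : (n:ℝ) - 1/2 - (k:ℝ) ≤ Real.sqrt ((n:ℝ)^2 - 2*(m:ℝ) - (n:ℝ) + 1/4) := by
      calc (n:ℝ) - 1/2 - (k:ℝ) ≤ |(n:ℝ) - 1/2 - (k:ℝ)| := le_abs_self _
        _ = Real.sqrt (((n:ℝ) - 1/2 - (k:ℝ))^2) := (Real.sqrt_sq_eq_abs _).symm
        _ ≤ _ := Real.sqrt_le_sqrt hsq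
    linarith
  · intro hgt
    push_neg at hgt
    refine ⟨M, hsub, hM.2, ?_⟩
    rw [hKcast]
    have hA : (m:ℝ) ≤ (k:ℝ)*(2*(k:ℝ)+1) := by
      rcases hEG0 with hA | hB
      · exact_mod_cast hA
      · have hB' := hBR hB
        rcases le_or_gt (2*(n:ℝ)) (5*(k:ℝ)+3) with h5 | h5
        · nlinarith [mul_nonneg hk0 (by linarith : (0:ℝ) ≤ 5*(k:ℝ)+3-2*(n:ℝ))]
        · exfalso
          have f1 : (0:ℝ) ≤ (2*(n:ℝ)-3) - 5*(k:ℝ) := by linarith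
          have f2 : (0:ℝ) ≤ (8*(n:ℝ)-2) - 5*(k:ℝ) := by linarith
          nlinarith [mul_nonneg f1 f2, hgt]
    have hsq : 8*(m:ℝ)+1 ≤ (4*(k:ℝ)+1)^2 := by nlinarith [hA]
    have hsqrt : Real.sqrt (8*(m:ℝ)+1) ≤ 4*(k:ℝ)+1 := by
      calc Real.sqrt (8*(m:ℝ)+1) ≤ Real.sqrt ((4*(k:ℝ)+1)^2) := Real.sqrt_le_sqrt hsq
        _ = 4*(k:ℝ)+1 := Real.sqrt_sq (by positivity)
    linarith
end

section
/- Let $n$ be a multiple of $4(\Delta+1)$, let $K$ be the complete graph on $[n]$, let $c$ be the balanced $\pm1$-edge labeling of $K$ whose plus-edges form the graph obtained from the complete bipartite graph $K_{n/2,n/2}$ by deleting a matching of size $n/4$, and let $G$ be the disjoint union of $\frac{n}{\Delta+1}$ copies of $K_{\Delta+1}$. Then every permutation $\pi \in S_n$ satisfies $m^+(G_\pi) \le \left(\frac{1}{2} + \frac{1}{2\Delta}\right) m(G)$. -/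
open Finset


private lemma div_eq_iff'8 (d b u : ℕ) (hd : 0 < d) : u / d = b ↔ b * d ≤ u ∧ u < b * d + d := by
  constructor
  · rintro rfl
    have h1 := Nat.div_add_mod u d
    have h2 := Nat.mod_lt u hd
    constructor <;> nlinarith [Nat.div_mul_le_self u d]
  · rintro ⟨h1, h2⟩
    have := Nat.div_add_mod u d
    have h3 : u / d ≤ b := by
      by_contra h
      push_neg at h
      have : (b+1) * d ≤ (u/d) * d := Nat.mul_le_mul_right d h
      nlinarith [Nat.div_mul_le_self u d]
    have h4 : b ≤ u / d := by
      have := Nat.div_le_div_right (c := d) h1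
      rwa [Nat.mul_div_cancel b hd] at this
    omega

private lemma block_card8 (Δ n b : ℕ) (hdvd : (Δ+1) ∣ n) (hb : b < n/(Δ+1)) :
    ((univ : Finset (Fin n)).filter (fun u : Fin n => (u:ℕ)/(Δ+1) = b)).card = Δ+1 := by
  have hub : b * (Δ+1) + (Δ+1) ≤ n := by
    have : (b+1) * (Δ+1) ≤ (n/(Δ+1)) * (Δ+1) := Nat.mul_le_mul_right _ hb
    rw [Nat.div_mul_cancel hdvd] at this
    nlinarith
  have : ((univ : Finset (Fin n)).filter (fun u : Fin n => (u:ℕ)/(Δ+1) = b)).card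
      = (Finset.Ico (b*(Δ+1)) (b*(Δ+1)+(Δ+1))).card := by
    have hn0 : 0 < n := by omega
    refine Finset.card_nbij' (fun u => (u : ℕ)) (fun x => (⟨x % n, Nat.mod_lt _ hn0⟩ : Fin n)) ?_ ?_ ?_ ?_
    · intro a ha
      simp only [Finset.mem_coe, mem_filter, mem_univ, true_and] at ha
      rw [div_eq_iff'8 (Δ+1) b a (by omega)] at ha
      simp [Finset.mem_Ico]; omega
    · intro x hx
      simp only [Finset.mem_coe, Finset.mem_Ico] at hx
      simp only [Finset.mem_coe, mem_filter, mem_univ, true_and]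
      have : x % n = x := Nat.mod_eq_of_lt (by omega)
      rw [this, div_eq_iff'8 (Δ+1) b _ (by omega)]
      omega
    · intro a _
      exact Fin.ext (Nat.mod_eq_of_lt a.isLt)
    · intro x hx
      simp only [Finset.mem_coe, Finset.mem_Ico] at hx
      exact Nat.mod_eq_of_lt (by omega)
  rw [this]
  simp


/-- Upper bound construction for c_Δ: with n a multiple of 4(Δ+1), the plus-edges
forming K_{n/2,n/2} minus a matching of size n/4 (pairing i with i + n/2 for
i < n/4), and G a disjoint union of n/(Δ+1) copies of K_{Δ+1}, every copy G_π
has at most (1/2 + 1/(2Δ))·m(G) plus-edges. -/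
theorem stmt_8 (Δ : ℕ) (hΔ : 1 ≤ Δ) (n : ℕ) (hn : 0 < n)
    (hdvd : 4 * (Δ + 1) ∣ n)
    (c : Sym2 (Fin n) → ℤ)
    (hc : ∀ u v : Fin n, u ≠ v →
      (c s(u, v) = 1 ∨ c s(u, v) = -1) ∧
      (c s(u, v) = 1 ↔
        (((u : ℕ) < n / 2 ↔ ¬ ((v : ℕ) < n / 2)) ∧
          ¬ (min (u : ℕ) (v : ℕ) < n / 4 ∧
              max (u : ℕ) (v : ℕ) = min (u : ℕ) (v : ℕ) + n / 2))))
    (G : SimpleGraph (Fin n)) [DecidableRel G.Adj]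
    (hG : ∀ u v : Fin n, G.Adj u v ↔ (u ≠ v ∧ (u : ℕ) / (Δ + 1) = (v : ℕ) / (Δ + 1))) :
    ∀ π : Equiv.Perm (Fin n),
      ((G.edgeFinset.filter (fun e => c (Sym2.map π e) = 1)).card : ℝ)
        ≤ (1 / 2 + 1 / (2 * Δ)) * (G.edgeFinset.card : ℝ) := by
  intro π
  classical
  have hdvd1 : (Δ + 1) ∣ n := dvd_trans (Dvd.intro_left 4 rfl) hdvd
  set B := n / (Δ + 1) with hB
  have hBn : B * (Δ + 1) = n := Nat.div_mul_cancel hdvd1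
  set P : Fin n → Prop := fun v => ((π v : ℕ) < n / 2) with hP
  have hPdec : DecidablePred P := fun v => Nat.decLt _ _
  set pairs : Finset (Fin n × Fin n) :=
    univ.filter (fun p : Fin n × Fin n => G.Adj p.1 p.2 ∧ P p.1 ∧ ¬ P p.2) with hpairs
  -- Step A : plus-edges inject into ordered crossing pairs
  have stepA : (G.edgeFinset.filter (fun e => c (Sym2.map π e) = 1)).card ≤ pairs.card := by
    apply Finset.card_le_card_of_surjOn (fun p : Fin n × Fin n => s(p.1, p.2))
    intro e he
    simp only [Finset.coe_filter, Set.mem_setOf_eq, SimpleGraph.mem_edgeFinset] at he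
    obtain ⟨heE, heC⟩ := he
    induction e using Sym2.ind with
    | _ u v =>
      rw [SimpleGraph.mem_edgeSet] at heE
      have huv : u ≠ v := heE.ne
      have hπuv : π u ≠ π v := fun h => huv (π.injective h)
      have hmap : Sym2.map π s(u, v) = s(π u, π v) := rfl
      rw [hmap] at heC
      have hcross := ((hc (π u) (π v) hπuv).2.mp heC).1
      by_cases hu : P u
      · have hv : ¬ P v := by
          simp only [hP] at hu ⊢
          exact hcross.mp hu
        refine ⟨(u, v), ?_, rfl⟩
        simp only [hpairs, Finset.coe_filter, Set.mem_setOf_eq, mem_univ, true_and]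
        exact ⟨heE, hu, hv⟩
      · have hv : P v := by
          simp only [hP] at hu ⊢
          by_contra hv
          exact hu (hcross.mpr hv)
        refine ⟨(v, u), ?_, Sym2.eq_swap⟩
        simp only [hpairs, Finset.coe_filter, Set.mem_setOf_eq, mem_univ, true_and]
        exact ⟨heE.symm, hv, hu⟩
  -- blocks
  set A : ℕ → Finset (Fin n) :=
    fun b => univ.filter (fun u : Fin n => (u:ℕ)/(Δ+1) = b ∧ P u) with hA
  set C : ℕ → Finset (Fin n) :=
    fun b => univ.filter (fun u : Fin n => (u:ℕ)/(Δ+1) = b ∧ ¬ P u) with hC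
  -- Step B : pairs ⊆ union of A b ×ˢ C b
  have stepB : pairs ⊆ (Finset.range B).biUnion (fun b => A b ×ˢ C b) := by
    intro p hp
    simp only [hpairs, mem_filter, mem_univ, true_and] at hp
    obtain ⟨hadj, hp1, hp2⟩ := hp
    rw [hG] at hadj
    obtain ⟨hne, hblk⟩ := hadj
    rw [Finset.mem_biUnion]
    refine ⟨(p.1 : ℕ)/(Δ+1), ?_, ?_⟩
    · rw [Finset.mem_range]
      exact Nat.div_lt_div_of_lt_of_dvd hdvd1 p.1.isLt
    · rw [Finset.mem_product]
      constructor
      · simp only [hA, mem_filter, mem_univ, true_and]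
        exact hp1
      · simp only [hC, mem_filter, mem_univ, true_and]
        exact ⟨hblk.symm, hp2⟩
  -- Step C : sizes within blocks
  have stepC : ∀ b ∈ Finset.range B, (A b).card + (C b).card = Δ + 1 := by
    intro b hb
    rw [Finset.mem_range] at hb
    have hAe : A b = ((univ : Finset (Fin n)).filter
        (fun u : Fin n => (u:ℕ)/(Δ+1) = b)).filter P := by
      simp only [hA, Finset.filter_filter]
    have hCe : C b = ((univ : Finset (Fin n)).filter
        (fun u : Fin n => (u:ℕ)/(Δ+1) = b)).filter (fun u => ¬ P u) := by
      simp only [hC, Finset.filter_filter]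
    rw [hAe, hCe, Finset.card_filter_add_card_filter_not, block_card8 Δ n b hdvd1 hb]
  -- Step D : 4 * pairs.card ≤ n * (Δ+1)
  have stepD : 4 * pairs.card ≤ n * (Δ + 1) := by
    have h1 : pairs.card ≤ ∑ b ∈ Finset.range B, (A b).card * (C b).card := by
      calc pairs.card ≤ ((Finset.range B).biUnion (fun b => A b ×ˢ C b)).card :=
            Finset.card_le_card stepB
        _ ≤ ∑ b ∈ Finset.range B, (A b ×ˢ C b).card := Finset.card_biUnion_le
        _ = ∑ b ∈ Finset.range B, (A b).card * (C b).card := by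
            simp [Finset.card_product]
    have h2 : ∑ b ∈ Finset.range B, 4 * ((A b).card * (C b).card)
        ≤ ∑ b ∈ Finset.range B, (Δ + 1) ^ 2 := by
      apply Finset.sum_le_sum
      intro b hb
      have := stepC b hb
      nlinarith [sq_nonneg ((A b).card - (C b).card : ℤ)]
    rw [Finset.sum_const, Finset.card_range] at h2
    rw [← Finset.mul_sum] at h2
    calc 4 * pairs.card ≤ 4 * ∑ b ∈ Finset.range B, (A b).card * (C b).card :=
          Nat.mul_le_mul_left 4 h1
      _ ≤ B * (Δ + 1) ^ 2 := h2
      _ = n * (Δ + 1) := by rw [pow_two, ← mul_assoc, hBn]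
  -- Step E : edge count
  have hdeg : ∀ v : Fin n, G.degree v = Δ := by
    intro v
    have hnb : G.neighborFinset v = ((univ : Finset (Fin n)).filter
        (fun u : Fin n => (u:ℕ)/(Δ+1) = (v:ℕ)/(Δ+1))).erase v := by
      ext u
      simp only [SimpleGraph.mem_neighborFinset, Finset.mem_erase, mem_filter, mem_univ, true_and,
        hG]
      constructor
      · rintro ⟨hne, hblk⟩
        exact ⟨fun h => hne h.symm, hblk.symm⟩
      · rintro ⟨hne, hblk⟩
        exact ⟨fun h => hne h.symm, hblk.symm⟩
    rw [SimpleGraph.degree, hnb, Finset.card_erase_of_mem (by simp),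
      block_card8 Δ n _ hdvd1 (Nat.div_lt_div_of_lt_of_dvd hdvd1 v.isLt)]
    omega
  have stepE : 2 * G.edgeFinset.card = n * Δ := by
    have := G.sum_degrees_eq_twice_card_edges
    rw [Finset.sum_congr rfl (fun v _ => hdeg v)] at this
    simp only [Finset.sum_const, Finset.card_univ, Fintype.card_fin, smul_eq_mul] at this
    omega
  -- Final real arithmetic
  have key : 4 * (G.edgeFinset.filter (fun e => c (Sym2.map π e) = 1)).card ≤ n * (Δ + 1) :=
    le_trans (by omega) stepD
  set c1 := (G.edgeFinset.filter (fun e => c (Sym2.map π e) = 1)).card with hc1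
  set c2 := G.edgeFinset.card with hc2
  have hΔR : (1:ℝ) ≤ (Δ:ℝ) := by exact_mod_cast hΔ
  have hkeyR : 4 * (c1:ℝ) ≤ (n:ℝ) * ((Δ:ℝ) + 1) := by exact_mod_cast key
  have hER : 2 * (c2:ℝ) = (n:ℝ) * (Δ:ℝ) := by exact_mod_cast stepE
  have hrw : (1/2 + 1/(2*(Δ:ℝ))) = ((Δ:ℝ)+1)/(2*(Δ:ℝ)) := by
    field_simp <;> ring
  rw [hrw, div_mul_eq_mul_div, le_div_iff₀ (by positivity)]
  nlinarith [mul_le_mul_of_nonneg_right hkeyR (le_trans zero_le_one hΔR)]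
end

section
/- Let $G$ be a graph and let $H = P_1 \cup \cdots \cup P_k$ be a union of vertex-disjoint nontrivial paths in $G$ with the maximum possible total number of edges. Let $V_1$ be the set of endvertices of the paths and $V_0 = V(G) \setminus V(H)$. Then the induced subgraph $G[V_0 \cup V_1]$ has at most $k$ edges; in fact its edge set is contained in the set of $k$ pairs $\{x_i, y_i\}$ of endvertices of the same path $P_i$. -/
open Finset

private lemma endwalk {V : Type*} {G : SimpleGraph V} {a b u : V} (P : G.Walk a b)
    (hP : P.IsPath) (hu : u = a ∨ u = b) :
    ∃ (w : V) (W : G.Walk w u), W.IsPath ∧ (∀ z, z ∈ W.support ↔ z ∈ P.support) ∧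
      W.length = P.length := by
  rcases hu with rfl | rfl
  · exact ⟨b, P.reverse, hP.reverse, fun z => by simp, by simp⟩
  · exact ⟨a, P, hP, fun z => Iff.rfl, rfl⟩

private lemma key1 {V : Type*} [Fintype V] [DecidableEq V] {G : SimpleGraph V}
    {k : ℕ} {x y : Fin k → V} {P : ∀ i, G.Walk (x i) (y i)}
    (hpath : ∀ i, (P i).IsPath)
    (hnontriv : ∀ i, x i ≠ y i)
    (hdisj : ∀ i j, i ≠ j → ∀ v : V, v ∈ (P i).support → v ∉ (P j).support)
    (hmax : ∀ (k' : ℕ) (x' y' : Fin k' → V) (P' : ∀ i, G.Walk (x' i) (y' i)),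
      (∀ i, (P' i).IsPath) → (∀ i, x' i ≠ y' i) →
      (∀ i j, i ≠ j → ∀ v : V, v ∈ (P' i).support → v ∉ (P' j).support) →
      ∑ i, (P' i).length ≤ ∑ i, (P i).length)
    {u v : V}
    (hu : ∀ i, u ∉ (P i).support) (hv : ∀ i, v ∉ (P i).support)
    (hadj : G.Adj u v) : False := by
  set x' : Fin (k+1) → V := Fin.snoc x u with hx'
  set y' : Fin (k+1) → V := Fin.snoc y v with hy'
  have p1 : u = x' (Fin.last k) := by simp [hx']
  have p2 : v = y' (Fin.last k) := by simp [hy']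
  have q1 : ∀ i : Fin k, x i = x' i.castSucc := fun i => by simp [hx']
  have q2 : ∀ i : Fin k, y i = y' i.castSucc := fun i => by simp [hy']
  obtain ⟨P', hlast, hcast⟩ :
      ∃ P' : ∀ a : Fin (k+1), G.Walk (x' a) (y' a),
        P' (Fin.last k) = (SimpleGraph.Walk.cons hadj SimpleGraph.Walk.nil).copy p1 p2 ∧
        ∀ i : Fin k, P' i.castSucc = (P i).copy (q1 i) (q2 i) :=
    ⟨fun a => Fin.lastCases (motive := fun a => G.Walk (x' a) (y' a))
      ((SimpleGraph.Walk.cons hadj SimpleGraph.Walk.nil).copy p1 p2)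
      (fun i => (P i).copy (q1 i) (q2 i)) a,
      Fin.lastCases_last, fun i => Fin.lastCases_castSucc i⟩
  have hpath' : ∀ a, (P' a).IsPath := by
    intro a
    induction a using Fin.lastCases with
    | last => rw [hlast, SimpleGraph.Walk.isPath_copy]
              simp [SimpleGraph.Walk.isPath_def, hadj.ne]
    | cast i => rw [hcast i, SimpleGraph.Walk.isPath_copy]; exact hpath i
  have hnontriv' : ∀ a, x' a ≠ y' a := by
    intro a
    induction a using Fin.lastCases with
    | last => rw [← p1, ← p2]; exact hadj.ne
    | cast i => rw [← q1 i, ← q2 i]; exact hnontriv i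
  have hsupp : ∀ a z, z ∈ (P' a).support →
      (a = Fin.last k ∧ (z = u ∨ z = v)) ∨ (∃ i : Fin k, a = i.castSucc ∧ z ∈ (P i).support) := by
    intro a z hz
    induction a using Fin.lastCases with
    | last =>
      rw [hlast, SimpleGraph.Walk.support_copy] at hz
      simp only [SimpleGraph.Walk.support_cons, SimpleGraph.Walk.support_nil,
        List.mem_cons, List.mem_singleton] at hz
      left; exact ⟨rfl, by tauto⟩
    | cast i =>
      rw [hcast i, SimpleGraph.Walk.support_copy] at hz
      right; exact ⟨i, rfl, hz⟩
  have hdisj' : ∀ a b, a ≠ b → ∀ z : V, z ∈ (P' a).support → z ∉ (P' b).support := by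
    intro a b hab z hza hzb
    rcases hsupp a z hza with ⟨ha, hz1⟩ | ⟨i, ha, hz1⟩ <;>
      rcases hsupp b z hzb with ⟨hb, hz2⟩ | ⟨i', hb, hz2⟩
    · exact hab (ha.trans hb.symm)
    · rcases hz1 with rfl | rfl
      · exact hu i' hz2
      · exact hv i' hz2
    · rcases hz2 with rfl | rfl
      · exact hu i hz1
      · exact hv i hz1
    · refine hdisj i i' ?_ z hz1 hz2
      rintro rfl; exact hab (ha.trans hb.symm)
  have hlen : ∑ a, (P' a).length = (∑ i, (P i).length) + 1 := by
    rw [Fin.sum_univ_castSucc]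
    have h1 : ∀ i : Fin k, (P' i.castSucc).length = (P i).length := by
      intro i; rw [hcast i, SimpleGraph.Walk.length_copy]
    have h2 : (P' (Fin.last k)).length = 1 := by
      rw [hlast, SimpleGraph.Walk.length_copy]; rfl
    rw [Finset.sum_congr rfl (fun i _ => h1 i), h2]
  have := hmax (k+1) x' y' P' hpath' hnontriv' hdisj'
  omega

private lemma key2 {V : Type*} [Fintype V] [DecidableEq V] {G : SimpleGraph V}
    {k : ℕ} {x y : Fin k → V} {P : ∀ i, G.Walk (x i) (y i)}
    (hpath : ∀ i, (P i).IsPath)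
    (hnontriv : ∀ i, x i ≠ y i)
    (hdisj : ∀ i j, i ≠ j → ∀ v : V, v ∈ (P i).support → v ∉ (P j).support)
    (hmax : ∀ (k' : ℕ) (x' y' : Fin k' → V) (P' : ∀ i, G.Walk (x' i) (y' i)),
      (∀ i, (P' i).IsPath) → (∀ i, x' i ≠ y' i) →
      (∀ i j, i ≠ j → ∀ v : V, v ∈ (P' i).support → v ∉ (P' j).support) →
      ∑ i, (P' i).length ≤ ∑ i, (P i).length)
    {u v : V} {j : Fin k}
    (hu : ∀ i, u ∉ (P i).support)
    (hv : v = x j ∨ v = y j)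
    (hadj : G.Adj u v) : False := by
  obtain ⟨ov, W, hWpath, hWsupp, hWlen⟩ := endwalk (P j) (hpath j) hv
  set W2 : G.Walk v ov := W.reverse with hW2
  have hW2supp : ∀ z, z ∈ W2.support ↔ z ∈ (P j).support := by
    intro z; rw [hW2, SimpleGraph.Walk.support_reverse, List.mem_reverse]; exact hWsupp z
  set N : G.Walk u ov := SimpleGraph.Walk.cons hadj W2 with hN
  have hNpath : N.IsPath := hWpath.reverse.cons (fun h => hu j ((hW2supp u).1 h))
  have hovP : ov ∈ (P j).support := (hWsupp ov).1 W.start_mem_support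
  have hne : u ≠ ov := fun h => hu j (h ▸ hovP)
  set x' : Fin k → V := Function.update x j u with hx'
  set y' : Fin k → V := Function.update y j ov with hy'
  have p1 : u = x' j := by simp [hx']
  have p2 : ov = y' j := by simp [hy']
  have q1 : ∀ a : Fin k, a ≠ j → x a = x' a := fun a h => by
    simp [hx', Function.update_of_ne h]
  have q2 : ∀ a : Fin k, a ≠ j → y a = y' a := fun a h => by
    simp [hy', Function.update_of_ne h]
  obtain ⟨P', hPj, hPa⟩ :
      ∃ P' : ∀ a : Fin k, G.Walk (x' a) (y' a),
        P' j = N.copy p1 p2 ∧ ∀ a, ∀ h : a ≠ j, P' a = (P a).copy (q1 a h) (q2 a h) := by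
    refine ⟨fun a => if h : a = j then N.copy (by rw [h]; exact p1) (by rw [h]; exact p2)
      else (P a).copy (q1 a h) (q2 a h), ?_, ?_⟩
    · exact dif_pos rfl
    · intro a h; exact dif_neg h
  have hpath' : ∀ a, (P' a).IsPath := by
    intro a
    by_cases h : a = j
    · subst h; rw [hPj, SimpleGraph.Walk.isPath_copy]; exact hNpath
    · rw [hPa a h, SimpleGraph.Walk.isPath_copy]; exact hpath a
  have hnontriv' : ∀ a, x' a ≠ y' a := by
    intro a
    by_cases h : a = j
    · subst h; rw [← p1, ← p2]; exact hne
    · rw [← q1 a h, ← q2 a h]; exact hnontriv a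
  have hsupp : ∀ a z, z ∈ (P' a).support →
      (a = j ∧ (z = u ∨ z ∈ (P j).support)) ∨ (a ≠ j ∧ z ∈ (P a).support) := by
    intro a z hz
    by_cases h : a = j
    · subst h
      rw [hPj, SimpleGraph.Walk.support_copy, hN, SimpleGraph.Walk.support_cons] at hz
      rcases List.mem_cons.1 hz with rfl | hz
      · exact Or.inl ⟨rfl, Or.inl rfl⟩
      · exact Or.inl ⟨rfl, Or.inr ((hW2supp z).1 hz)⟩
    · rw [hPa a h, SimpleGraph.Walk.support_copy] at hz
      exact Or.inr ⟨h, hz⟩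
  have hdisj' : ∀ a b, a ≠ b → ∀ z : V, z ∈ (P' a).support → z ∉ (P' b).support := by
    intro a b hab z hza hzb
    rcases hsupp a z hza with ⟨ha, hz1⟩ | ⟨ha, hz1⟩ <;>
      rcases hsupp b z hzb with ⟨hb, hz2⟩ | ⟨hb, hz2⟩
    · exact hab (ha.trans hb.symm)
    · rcases hz1 with rfl | hz1
      · exact hu b hz2
      · exact hdisj j b (ha ▸ hab) z hz1 hz2
    · rcases hz2 with rfl | hz2
      · exact hu a hz1
      · exact hdisj a j ha z hz1 hz2
    · exact hdisj a b hab z hz1 hz2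
  have hlen : ∀ a, (P' a).length = (P a).length + (if a = j then 1 else 0) := by
    intro a
    by_cases h : a = j
    · subst h
      rw [hPj, SimpleGraph.Walk.length_copy, hN, SimpleGraph.Walk.length_cons, hW2,
        SimpleGraph.Walk.length_reverse, hWlen, if_pos rfl]
    · rw [hPa a h, SimpleGraph.Walk.length_copy, if_neg h, Nat.add_zero]
  have hsum : ∑ a, (P' a).length = (∑ a, (P a).length) + 1 := by
    rw [Finset.sum_congr rfl (fun a _ => hlen a), Finset.sum_add_distrib,
      Finset.sum_ite_eq' Finset.univ j (fun _ => 1)]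
    simp
  have := hmax k x' y' P' hpath' hnontriv' hdisj'
  omega

private lemma key3 {V : Type*} [Fintype V] [DecidableEq V] {G : SimpleGraph V}
    {k : ℕ} {x y : Fin k → V} {P : ∀ i, G.Walk (x i) (y i)}
    (hpath : ∀ i, (P i).IsPath)
    (hnontriv : ∀ i, x i ≠ y i)
    (hdisj : ∀ i j, i ≠ j → ∀ v : V, v ∈ (P i).support → v ∉ (P j).support)
    (hmax : ∀ (k' : ℕ) (x' y' : Fin k' → V) (P' : ∀ i, G.Walk (x' i) (y' i)),
      (∀ i, (P' i).IsPath) → (∀ i, x' i ≠ y' i) →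
      (∀ i j, i ≠ j → ∀ v : V, v ∈ (P' i).support → v ∉ (P' j).support) →
      ∑ i, (P' i).length ≤ ∑ i, (P i).length)
    {u v : V} {i j : Fin k} (hij : i ≠ j)
    (hu : u = x i ∨ u = y i)
    (hv : v = x j ∨ v = y j)
    (hadj : G.Adj u v) : False := by
  obtain ⟨ou, W1, hW1path, hW1supp, hW1len⟩ := endwalk (P i) (hpath i) hu
  obtain ⟨ov, W, hWpath, hWsupp, hWlen⟩ := endwalk (P j) (hpath j) hv
  set W2 : G.Walk v ov := W.reverse with hW2
  have hW2supp : ∀ z, z ∈ W2.support ↔ z ∈ (P j).support := by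
    intro z; rw [hW2, SimpleGraph.Walk.support_reverse, List.mem_reverse]; exact hWsupp z
  set M : G.Walk ou ov := W1.append (SimpleGraph.Walk.cons hadj W2) with hM
  have hMsupport : M.support = W1.support ++ W2.support := by
    rw [hM, SimpleGraph.Walk.support_append, SimpleGraph.Walk.support_cons, List.tail_cons]
  have hMsupp : ∀ z, z ∈ M.support ↔ z ∈ (P i).support ∨ z ∈ (P j).support := by
    intro z
    rw [hMsupport, List.mem_append, hW1supp z, hW2supp z]
  have hMpath : M.IsPath := by
    rw [SimpleGraph.Walk.isPath_def, hMsupport, List.nodup_append]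
    refine ⟨hW1path.support_nodup, hWpath.reverse.support_nodup, ?_⟩
    rintro z hz1 _ hz2 rfl
    exact hdisj i j hij z ((hW1supp z).1 hz1) ((hW2supp z).1 hz2)
  have hMlen : M.length = (P i).length + ((P j).length + 1) := by
    rw [hM, SimpleGraph.Walk.length_append, SimpleGraph.Walk.length_cons, hW2,
      SimpleGraph.Walk.length_reverse, hW1len, hWlen]
  have hou : ou ∈ (P i).support := (hW1supp ou).1 W1.start_mem_support
  have hov : ov ∈ (P j).support := by
    refine (hW2supp ov).1 ?_
    rw [hW2, SimpleGraph.Walk.support_reverse, List.mem_reverse]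
    exact W.start_mem_support
  have hne : ou ≠ ov := fun h => hdisj i j hij ou hou (h ▸ hov)
  have hk : 0 < k := j.pos
  obtain ⟨m, rfl⟩ : ∃ m, k = m + 1 := ⟨k - 1, by omega⟩
  obtain ⟨l₀, hl₀⟩ := Fin.exists_succAbove_eq hij
  have hfinj : Function.Injective (j.succAbove) := Fin.succAbove_right_injective
  set x' : Fin m → V := Function.update (fun l => x (j.succAbove l)) l₀ ou with hx'
  set y' : Fin m → V := Function.update (fun l => y (j.succAbove l)) l₀ ov with hy'
  have p1 : ou = x' l₀ := by simp [hx']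
  have p2 : ov = y' l₀ := by simp [hy']
  have q1 : ∀ a : Fin m, a ≠ l₀ → x (j.succAbove a) = x' a := fun a h => by
    simp [hx', Function.update_of_ne h]
  have q2 : ∀ a : Fin m, a ≠ l₀ → y (j.succAbove a) = y' a := fun a h => by
    simp [hy', Function.update_of_ne h]
  obtain ⟨P', hPl₀, hPa⟩ :
      ∃ P' : ∀ a : Fin m, G.Walk (x' a) (y' a),
        P' l₀ = M.copy p1 p2 ∧
        ∀ a, ∀ h : a ≠ l₀, P' a = (P (j.succAbove a)).copy (q1 a h) (q2 a h) := by
    refine ⟨fun a => if h : a = l₀ then M.copy (by rw [h]; exact p1) (by rw [h]; exact p2)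
      else (P (j.succAbove a)).copy (q1 a h) (q2 a h), ?_, ?_⟩
    · exact dif_pos rfl
    · intro a h; exact dif_neg h
  have hpath' : ∀ a, (P' a).IsPath := by
    intro a
    by_cases h : a = l₀
    · subst h; rw [hPl₀, SimpleGraph.Walk.isPath_copy]; exact hMpath
    · rw [hPa a h, SimpleGraph.Walk.isPath_copy]; exact hpath _
  have hnontriv' : ∀ a, x' a ≠ y' a := by
    intro a
    by_cases h : a = l₀
    · subst h; rw [← p1, ← p2]; exact hne
    · rw [← q1 a h, ← q2 a h]; exact hnontriv _
  have hsupp : ∀ a z, z ∈ (P' a).support →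
      (a = l₀ ∧ (z ∈ (P i).support ∨ z ∈ (P j).support)) ∨
      (a ≠ l₀ ∧ z ∈ (P (j.succAbove a)).support) := by
    intro a z hz
    by_cases h : a = l₀
    · subst h
      rw [hPl₀, SimpleGraph.Walk.support_copy] at hz
      exact Or.inl ⟨rfl, (hMsupp z).1 hz⟩
    · rw [hPa a h, SimpleGraph.Walk.support_copy] at hz
      exact Or.inr ⟨h, hz⟩
  have haux : ∀ (b : Fin m), b ≠ l₀ → ∀ z, z ∈ (P i).support ∨ z ∈ (P j).support →
      z ∉ (P (j.succAbove b)).support := by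
    intro b hb z hz hzb
    have h1 : j.succAbove b ≠ i := fun h => hb (hfinj (h.trans hl₀.symm))
    have h2 : j.succAbove b ≠ j := Fin.succAbove_ne j b
    rcases hz with hz | hz
    · exact hdisj i (j.succAbove b) (Ne.symm h1) z hz hzb
    · exact hdisj j (j.succAbove b) (Ne.symm h2) z hz hzb
  have hdisj' : ∀ a b, a ≠ b → ∀ z : V, z ∈ (P' a).support → z ∉ (P' b).support := by
    intro a b hab z hza hzb
    rcases hsupp a z hza with ⟨ha, hz1⟩ | ⟨ha, hz1⟩ <;>
      rcases hsupp b z hzb with ⟨hb, hz2⟩ | ⟨hb, hz2⟩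
    · exact hab (ha.trans hb.symm)
    · exact haux b hb z hz1 hz2
    · exact haux a ha z hz2 hz1
    · refine hdisj (j.succAbove a) (j.succAbove b) (fun h => hab (hfinj h)) z hz1 hz2
  have hlen : ∀ a, (P' a).length =
      (P (j.succAbove a)).length + (if a = l₀ then (P j).length + 1 else 0) := by
    intro a
    by_cases h : a = l₀
    · subst h
      rw [hPl₀, SimpleGraph.Walk.length_copy, hMlen, if_pos rfl, hl₀]
    · rw [hPa a h, SimpleGraph.Walk.length_copy, if_neg h, Nat.add_zero]
  have hsum : ∑ a, (P' a).length = (∑ a, (P a).length) + 1 := by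
    rw [Finset.sum_congr rfl (fun a _ => hlen a), Finset.sum_add_distrib,
      Finset.sum_ite_eq' Finset.univ l₀ (fun _ => (P j).length + 1),
      Fin.sum_univ_succAbove (fun a => (P a).length) j]
    simp
    omega
  have := hmax m x' y' P' hpath' hnontriv' hdisj'
  omega

/-- If H = P₁ ∪ ⋯ ∪ P_k is a union of vertex-disjoint nontrivial paths in G with
maximum total number of edges, V₁ the set of endvertices and V₀ the uncovered
vertices, then every edge of G inside V₀ ∪ V₁ joins the two endvertices of one
of the paths; in particular G[V₀ ∪ V₁] has at most k edges. -/
theorem stmt_11 {V : Type*} [Fintype V] [DecidableEq V] (G : SimpleGraph V)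
    (k : ℕ) (x y : Fin k → V) (P : ∀ i, G.Walk (x i) (y i))
    (hpath : ∀ i, (P i).IsPath)
    (hnontriv : ∀ i, x i ≠ y i)
    (hdisj : ∀ i j, i ≠ j → ∀ v : V, v ∈ (P i).support → v ∉ (P j).support)
    (hmax : ∀ (k' : ℕ) (x' y' : Fin k' → V) (P' : ∀ i, G.Walk (x' i) (y' i)),
      (∀ i, (P' i).IsPath) → (∀ i, x' i ≠ y' i) →
      (∀ i j, i ≠ j → ∀ v : V, v ∈ (P' i).support → v ∉ (P' j).support) →
      ∑ i, (P' i).length ≤ ∑ i, (P i).length)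
    (V₀ V₁ : Set V)
    (hV₁ : V₁ = {v : V | ∃ i, v = x i ∨ v = y i})
    (hV₀ : V₀ = {v : V | ∀ i, v ∉ (P i).support}) :
    (∀ u v : V, u ∈ V₀ ∪ V₁ → v ∈ V₀ ∪ V₁ → G.Adj u v →
      ∃ i, s(u, v) = s(x i, y i)) ∧
    {e : Sym2 V | e ∈ G.edgeSet ∧ ∀ w ∈ e, w ∈ V₀ ∪ V₁}.ncard ≤ k := by
  subst hV₀ hV₁
  have main : ∀ u v : V,
      u ∈ ({v : V | ∀ i, v ∉ (P i).support} ∪ {v : V | ∃ i, v = x i ∨ v = y i}) →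
      v ∈ ({v : V | ∀ i, v ∉ (P i).support} ∪ {v : V | ∃ i, v = x i ∨ v = y i}) →
      G.Adj u v → ∃ i, s(u, v) = s(x i, y i) := by
    intro u v hu hv hadj
    rcases hu with hu | hu <;> rcases hv with hv | hv
    · exact (key1 hpath hnontriv hdisj hmax hu hv hadj).elim
    · obtain ⟨j, hvj⟩ := hv
      exact (key2 hpath hnontriv hdisj hmax hu hvj hadj).elim
    · obtain ⟨i, hui⟩ := hu
      exact (key2 hpath hnontriv hdisj hmax hv hui hadj.symm).elim
    · obtain ⟨i, hui⟩ := hu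
      obtain ⟨j, hvj⟩ := hv
      by_cases hij : i = j
      · subst hij
        rcases hui with rfl | rfl <;> rcases hvj with rfl | rfl
        · exact (hadj.ne rfl).elim
        · exact ⟨i, rfl⟩
        · exact ⟨i, Sym2.eq_swap⟩
        · exact (hadj.ne rfl).elim
      · exact (key3 hpath hnontriv hdisj hmax hij hui hvj hadj).elim
  refine ⟨main, ?_⟩
  have hsub : {e : Sym2 V | e ∈ G.edgeSet ∧ ∀ w ∈ e,
      w ∈ ({v : V | ∀ i, v ∉ (P i).support} ∪ {v : V | ∃ i, v = x i ∨ v = y i})} ⊆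
      Set.range (fun i : Fin k => s(x i, y i)) := by
    intro e he
    induction e using Sym2.ind with
    | _ u v =>
      obtain ⟨he, hw⟩ := he
      have hadj : G.Adj u v := he
      have hu := hw u (Sym2.mem_mk_left u v)
      have hv := hw v (Sym2.mem_mk_right u v)
      obtain ⟨i, hi⟩ := main u v hu hv hadj
      exact ⟨i, hi.symm⟩
  calc {e : Sym2 V | e ∈ G.edgeSet ∧ ∀ w ∈ e,
        w ∈ ({v : V | ∀ i, v ∉ (P i).support} ∪ {v : V | ∃ i, v = x i ∨ v = y i})}.ncard
      ≤ (Set.range (fun i : Fin k => s(x i, y i))).ncard :=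
        Set.ncard_le_ncard hsub (Set.finite_range _)
    _ ≤ k := by
        rw [← Set.image_univ]
        refine le_trans (Set.ncard_image_le Set.finite_univ) ?_
        simp [Set.ncard_univ]
end

section
/- Let $G$ be a graph, let $H$ be a union of vertex-disjoint nontrivial paths in $G$ with maximum total number of edges, let $u$ be a vertex not covered by $H$, and let $Q$ be one of the paths of $H$ with the two endpoints removed (a subpath of internal vertices). Then $u$ is not adjacent in $G$ to two consecutive vertices of $Q$; consequently $u$ has at most $\lceil n(Q)/2 \rceil$ neighbors on $Q$, where $n(Q)$ is the number of vertices of $Q$. -/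
open Finset

-- counting lemma
lemma aux_count {V : Type*} (p : V → Bool) (d : V) :
    ∀ l : List V, (∀ t : ℕ, t + 1 < l.length → ¬ (p (l.getD t d) = true ∧ p (l.getD (t+1) d) = true)) →
    (l.filter p).length ≤ (l.length + 1) / 2
  | [], _ => by simp
  | [a], _ => by by_cases h : p a <;> simp [h]
  | a :: b :: l, h => by
    have hl := aux_count p d l (fun t ht => by
      have := h (t+2) (by simp only [List.length_cons]; omega)
      simpa using this)
    have hab := h 0 (by simp)
    simp only [List.getD_cons_zero, List.getD_cons_succ] at hab
    have key : ((a :: b :: l).filter p).length ≤ (l.filter p).length + 1 := by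
      by_cases ha : p a
      · have hb : ¬ p b = true := fun hb => hab ⟨ha, hb⟩
        simp [ha, hb]
      · by_cases hb : p b <;> simp [ha, hb]
    calc ((a :: b :: l).filter p).length ≤ (l.filter p).length + 1 := key
      _ ≤ (l.length + 1) / 2 + 1 := by omega
      _ ≤ ((a :: b :: l).length + 1) / 2 := by simp; omega

lemma aux_exchange {V : Type*} {G : SimpleGraph V} {u : V} {x y : V} (W : G.Walk x y) :
    ∀ t : ℕ, W.IsPath → u ∉ W.support → t + 1 < W.support.length →
    G.Adj u (W.support.getD t u) → G.Adj u (W.support.getD (t+1) u) →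
    ∃ W' : G.Walk x y, W'.IsPath ∧ W'.length = W.length + 1 ∧
      ∀ v ∈ W'.support, v ∈ u :: W.support := by
  induction W with
  | nil => intro t _ _ ht; simp at ht
  | @cons a b c hadj p ih =>
    intro t hp hu ht ha hb
    simp only [SimpleGraph.Walk.support_cons] at hu ht ha hb ⊢
    rw [SimpleGraph.Walk.cons_isPath_iff] at hp
    obtain ⟨hp1, hp2⟩ := hp
    have hune : u ≠ a := fun h => hu (h ▸ List.mem_cons_self)
    have hup : u ∉ p.support := fun h => hu (List.mem_cons_of_mem _ h)
    match t with
    | 0 =>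
      simp only [List.getD_cons_zero, List.getD_cons_succ] at ha hb
      have hb0 : p.support.getD 0 u = b := by
        rw [p.support_eq_cons]; rfl
      rw [hb0] at hb
      refine ⟨.cons ha.symm (.cons hb p), ?_, by simp, ?_⟩
      · rw [SimpleGraph.Walk.cons_isPath_iff, SimpleGraph.Walk.cons_isPath_iff]
        exact ⟨⟨hp1, hup⟩, by simp [Ne.symm hune, hp2]⟩
      · intro v hv
        simp only [SimpleGraph.Walk.support_cons, List.mem_cons] at hv ⊢
        tauto
    | t + 1 =>
      simp only [List.getD_cons_succ] at ha hb
      have ht' : t + 1 < p.support.length := by simpa using ht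
      obtain ⟨W', h1, h2, h3⟩ := ih t hp1 hup ht' ha hb
      refine ⟨.cons hadj W', ?_, by simp [h2], ?_⟩
      · rw [SimpleGraph.Walk.cons_isPath_iff]
        refine ⟨h1, fun hmem => ?_⟩
        rcases List.mem_cons.mp (h3 a hmem) with h | h
        · exact hune h.symm
        · exact hp2 h
      · intro v hv
        simp only [SimpleGraph.Walk.support_cons, List.mem_cons] at hv ⊢
        rcases hv with h | h
        · tauto
        · rcases List.mem_cons.mp (h3 v h) with h | h <;> tauto

/-- If H is a maximum union of vertex-disjoint nontrivial paths in G, u a vertex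
not covered by H, and Q the interior of one of the paths, then u is not adjacent
to two consecutive vertices of Q, and hence u has at most ⌈n(Q)/2⌉ neighbors
on Q. -/
theorem stmt_12 {V : Type*} [Fintype V] [DecidableEq V] (G : SimpleGraph V)
    [DecidableRel G.Adj]
    (k : ℕ) (x y : Fin k → V) (P : ∀ i, G.Walk (x i) (y i))
    (hpath : ∀ i, (P i).IsPath)
    (hnontriv : ∀ i, x i ≠ y i)
    (hdisj : ∀ i j, i ≠ j → ∀ v : V, v ∈ (P i).support → v ∉ (P j).support)
    (hmax : ∀ (k' : ℕ) (x' y' : Fin k' → V) (P' : ∀ i, G.Walk (x' i) (y' i)),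
      (∀ i, (P' i).IsPath) → (∀ i, x' i ≠ y' i) →
      (∀ i j, i ≠ j → ∀ v : V, v ∈ (P' i).support → v ∉ (P' j).support) →
      ∑ i, (P' i).length ≤ ∑ i, (P i).length)
    (u : V) (hu : ∀ i, u ∉ (P i).support)
    (j : Fin k) (I : List V) (hI : I = ((P j).support.tail).dropLast) :
    (∀ t : ℕ, t + 1 < I.length →
      ¬ (G.Adj u (I.getD t u) ∧ G.Adj u (I.getD (t + 1) u))) ∧
    (I.filter (fun v => decide (G.Adj u v))).length ≤ (I.length + 1) / 2 := by
  have main : ∀ t : ℕ, t + 1 < I.length →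
      ¬ (G.Adj u (I.getD t u) ∧ G.Adj u (I.getD (t + 1) u)) := by
    rintro t ht ⟨ha, hb⟩
    set S := (P j).support with hS
    -- translate indices
    have hlen : I.length = S.length - 2 := by
      rw [hI]; simp [List.length_dropLast, List.length_tail]; omega
    have hSlen : t + 2 + 1 ≤ S.length := by omega
    have hgetD : ∀ s : ℕ, s < I.length → I.getD s u = S.getD (s+1) u := by
      intro s hs
      rw [hI]
      rw [List.getD_eq_getElem _ _ (by rw [← hI]; exact hs)]
      rw [List.getD_eq_getElem _ _ (by omega)]
      rw [List.getElem_dropLast, List.getElem_tail]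
    rw [hgetD t (by omega)] at ha
    rw [hgetD (t+1) ht] at hb
    rw [hS] at ha hb
    obtain ⟨W', h1, h2, h3⟩ := aux_exchange (P j) (t+1) (hpath j) (hu j)
      (by rw [← hS]; omega) ha hb
    -- build new family
    set P' : ∀ i, G.Walk (x i) (y i) := Function.update P j W' with hP'
    have hP'j : P' j = W' := Function.update_self j W' P
    have hP'ne : ∀ i, i ≠ j → P' i = P i := fun i h => Function.update_of_ne h W' P
    have hsup : ∀ v ∈ (P' j).support, v ∈ u :: (P j).support := by rw [hP'j]; exact h3
    have hpath' : ∀ i, (P' i).IsPath := by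
      intro i
      by_cases h : i = j
      · subst h; rw [hP'j]; exact h1
      · rw [hP'ne i h]; exact hpath i
    have hdisj' : ∀ i i', i ≠ i' → ∀ v : V, v ∈ (P' i).support → v ∉ (P' i').support := by
      intro i i' hne v hv hv'
      by_cases h : i = j
      · subst h
        have h' : i' ≠ i := fun h => hne h.symm
        rw [hP'ne i' h'] at hv'
        rcases List.mem_cons.mp (hsup v hv) with h | h
        · exact hu i' (h ▸ hv')
        · exact hdisj i i' hne v h hv'
      · rw [hP'ne i h] at hv
        by_cases h' : i' = j
        · subst h'
          rcases List.mem_cons.mp (hsup v hv') with hh | hh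
          · exact hu i (hh ▸ hv)
          · exact hdisj i i' h v hv hh
        · rw [hP'ne i' h'] at hv'
          exact hdisj i i' hne v hv hv'
    have hle := hmax k x y P' hpath' hnontriv hdisj'
    have hsum : ∑ i, (P' i).length = ∑ i, (P i).length + 1 := by
      have : (fun i => (P' i).length) = Function.update (fun i => (P i).length) j W'.length := by
        funext i
        by_cases h : i = j
        · subst h; rw [hP'j, Function.update_self]
        · rw [hP'ne i h, Function.update_of_ne h]
      rw [this, Finset.sum_update_of_mem (Finset.mem_univ j), h2]
      rw [← Finset.sum_erase_add _ _ (Finset.mem_univ j)]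
      simp [Finset.sdiff_singleton_eq_erase]
      omega
    omega
  refine ⟨main, ?_⟩
  apply aux_count (fun v => decide (G.Adj u v)) u I
  intro t ht h
  exact main t ht ⟨of_decide_eq_true h.1, of_decide_eq_true h.2⟩
end

section
/- Let $h(t_0,t_1,t_2,t_3) = \frac{1}{2}t_1^2 + \frac{5}{2}t_2^2 + \frac{9}{2}t_3^2 + 3t_0(t_2+t_3) + 4t_1t_2 + 6t_1t_3 + 7t_2t_3$. Then the minimum of $t_1 + 2t_2 + 3t_3$ over all nonnegative reals $t_0,t_1,t_2,t_3$ with $t_0+t_1+t_2+t_3 = \frac{1}{3}$ and $h(t_0,t_1,t_2,t_3) = \frac{1}{4}$ is at least $\frac{3\sqrt{2}}{4} - \frac{1}{2}$. -/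
set_option maxHeartbeats 1000000 in
/-- The optimization problem from the C₃-factor proof: under the constraints
t₀+t₁+t₂+t₃ = 1/3 and h(t₀,t₁,t₂,t₃) = 1/4, with all tᵢ ≥ 0, the objective
t₁ + 2t₂ + 3t₃ is at least 3√2/4 − 1/2. -/
theorem stmt_15 (t0 t1 t2 t3 : ℝ)
    (h0 : 0 ≤ t0) (h1 : 0 ≤ t1) (h2 : 0 ≤ t2) (h3 : 0 ≤ t3)
    (hsum : t0 + t1 + t2 + t3 = 1 / 3)
    (hh : (1 / 2) * t1 ^ 2 + (5 / 2) * t2 ^ 2 + (9 / 2) * t3 ^ 2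
        + 3 * t0 * (t2 + t3) + 4 * t1 * t2 + 6 * t1 * t3 + 7 * t2 * t3 = 1 / 4) :
    t1 + 2 * t2 + 3 * t3 ≥ 3 * Real.sqrt 2 / 4 - 1 / 2 := by
  have hr2 : Real.sqrt 2 ^ 2 = 2 := Real.sq_sqrt (by norm_num)
  have hrpos : (0:ℝ) < Real.sqrt 2 := Real.sqrt_pos.mpr (by norm_num)
  have hrlt : Real.sqrt 2 < 1.41426 := by nlinarith [hr2, hrpos]
  by_cases hc : (5607:ℝ)/10000 ≤ t1 + 2 * t2 + 3 * t3
  · linarith [hrlt]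
  · push_neg at hc
    have hw : (0:ℝ) ≤ 2*t1 + t2 + 3*t0 - 4393/10000 := by linarith
    have hid : (2*(t1 + 2*t2 + 3*t3)+1)^2 - 9/2
        = (2*t2 - 3*t0)^2 + (34 - 2*(60000/4393))*t1^2
          + (16 - 60000/4393)*(t1*t2) + (48 - 3*(60000/4393))*(t1*t0)
          + (60000/4393)*(t1*(2*t1 + t2 + 3*t0 - 4393/10000)) := by
      linear_combination (-9*t0 - 39*t1 - 33*t2 - 45*t3 - 3) * hsum + 18 * hh
    have key : 9/2 ≤ (2*(t1 + 2*t2 + 3*t3)+1)^2 := by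
      linarith [hid, sq_nonneg (2*t2 - 3*t0), sq_nonneg t1, mul_nonneg h1 h2,
        mul_nonneg h1 h0, mul_nonneg h1 hw]
    have hXpos : (0:ℝ) < 2*(t1 + 2*t2 + 3*t3) + 1 := by linarith
    have aux : ∀ X : ℝ, 0 < X → 9/2 ≤ X^2 → 3*Real.sqrt 2/2 ≤ X := by
      intro X hX1 hX2
      nlinarith [hr2, hrpos, hX1, hX2]
    have hX := aux _ hXpos key
    linarith
end

section
/- Let $K$ be a complete graph with a $\pm1$-edge labeling $c$, and let $C_i = x y z x$ and $C_j = x' y' z' x'$ be two vertex-disjoint triangles with all three edges of $C_i$ labeled $-1$ and all three edges of $C_j$ labeled $-1$. If some edge of $K$ between $\{x,y,z\}$ and $\{x',y',z'\}$ is labeled $+1$, then there exist two vertex-disjoint triangles $C_i'$ and $C_j'$ on the same six vertices with $m^+(C_i') + m^+(C_j') \ge 1$, i.e., with strictly more plus-edges in total than $C_i \cup C_j$. -/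
set_option maxHeartbeats 1000000

private lemma build_19 {V : Type*} [DecidableEq V] (c : Sym2 V → ℤ) (p q r p' q' r' : V)
    (hcard : ({p, q, r, p', q', r'} : Finset V).card = 6) (hc : c s(p, p') = 1) :
    ∃ a b d a' b' d' : V,
      ({a, b, d, a', b', d'} : Set V) = ({p, q, r, p', q', r'} : Set V) ∧
      a ≠ b ∧ b ≠ d ∧ a ≠ d ∧ a' ≠ b' ∧ b' ≠ d' ∧ a' ≠ d' ∧
      (({a, b, d} : Set V) ∩ ({a', b', d'} : Set V) = ∅) ∧
      (c s(a, b) = 1 ∨ c s(b, d) = 1 ∨ c s(a, d) = 1 ∨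
        c s(a', b') = 1 ∨ c s(b', d') = 1 ∨ c s(a', d') = 1) := by
  have hnd : ([p, q, r, p', q', r'] : List V).Nodup := by
    have h : ({p, q, r, p', q', r'} : Finset V) = ([p, q, r, p', q', r'] : List V).toFinset := by
      simp
    rw [h, List.card_toFinset] at hcard
    rw [← List.dedup_eq_self]
    exact (List.dedup_sublist _).eq_of_length hcard
  simp only [List.nodup_cons, List.mem_cons, List.mem_singleton, List.not_mem_nil,
    or_false, not_or, List.nodup_nil, and_true] at hnd
  obtain ⟨⟨hpq, hpr, hpp', hpq', hpr'⟩, ⟨hqr, hqp', hqq', hqr'⟩, ⟨hrp', hrq', hrr'⟩,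
    ⟨hp'q', hp'r'⟩, hq'r', -⟩ := hnd
  refine ⟨p, p', q, r, q', r', ?_, hpp', Ne.symm hqp', hpq, hrq', hq'r', hrr', ?_, Or.inl hc⟩
  · ext t; simp; tauto
  · rw [Set.eq_empty_iff_forall_notMem]
    intro t ht
    simp only [Set.mem_inter_iff, Set.mem_insert_iff, Set.mem_singleton_iff] at ht
    obtain ⟨h1 | h1 | h1, h2 | h2 | h2⟩ := ht <;> subst h1 <;> simp_all

/-- Local exchange: given two vertex-disjoint all-minus triangles xyz and x'y'z'
with a plus-edge between them, there are two vertex-disjoint triangles on the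
same six vertices with at least one plus-edge in total. -/
theorem stmt_19 {V : Type*} [DecidableEq V] (c : Sym2 V → ℤ)
    (x y z x' y' z' : V)
    (hdist : ({x, y, z, x', y', z'} : Finset V).card = 6)
    (hi : c s(x, y) = -1 ∧ c s(y, z) = -1 ∧ c s(x, z) = -1)
    (hj : c s(x', y') = -1 ∧ c s(y', z') = -1 ∧ c s(x', z') = -1)
    (hcross : ∃ u ∈ ({x, y, z} : Set V), ∃ v ∈ ({x', y', z'} : Set V),
      c s(u, v) = 1) :
    ∃ a b d a' b' d' : V,
      ({a, b, d, a', b', d'} : Set V) = ({x, y, z, x', y', z'} : Set V) ∧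
      a ≠ b ∧ b ≠ d ∧ a ≠ d ∧ a' ≠ b' ∧ b' ≠ d' ∧ a' ≠ d' ∧
      (({a, b, d} : Set V) ∩ ({a', b', d'} : Set V) = ∅) ∧
      (c s(a, b) = 1 ∨ c s(b, d) = 1 ∨ c s(a, d) = 1 ∨
        c s(a', b') = 1 ∨ c s(b', d') = 1 ∨ c s(a', d') = 1) := by
  obtain ⟨u, hu, v, hv, hc⟩ := hcross
  simp only [Set.mem_insert_iff, Set.mem_singleton_iff] at hu hv
  have perm : ∀ p q r p' q' r' : V,
      ({p, q, r, p', q', r'} : Set V) = ({x, y, z, x', y', z'} : Set V) →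
      ({p, q, r, p', q', r'} : Finset V) = ({x, y, z, x', y', z'} : Finset V) →
      c s(p, p') = 1 →
      ∃ a b d a' b' d' : V,
        ({a, b, d, a', b', d'} : Set V) = ({x, y, z, x', y', z'} : Set V) ∧
        a ≠ b ∧ b ≠ d ∧ a ≠ d ∧ a' ≠ b' ∧ b' ≠ d' ∧ a' ≠ d' ∧
        (({a, b, d} : Set V) ∩ ({a', b', d'} : Set V) = ∅) ∧
        (c s(a, b) = 1 ∨ c s(b, d) = 1 ∨ c s(a, d) = 1 ∨
          c s(a', b') = 1 ∨ c s(b', d') = 1 ∨ c s(a', d') = 1) := by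
    intro p q r p' q' r' hset hfin hc'
    obtain ⟨a, b, d, a', b', d', hs, h2⟩ :=
      build_19 c p q r p' q' r' (by rw [hfin]; exact hdist) hc'
    exact ⟨a, b, d, a', b', d', hs.trans hset, h2⟩
  clear hi hj hdist
  rcases hu with rfl | rfl | rfl <;> rcases hv with rfl | rfl | rfl
  · exact perm u y z v y' z' (by ext t; simp; try tauto) (by ext t; simp; try tauto) hc
  · exact perm u y z v x' z' (by ext t; simp; try tauto) (by ext t; simp; try tauto) hc
  · exact perm u y z v x' y' (by ext t; simp; try tauto) (by ext t; simp; try tauto) hc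
  · exact perm u x z v y' z' (by ext t; simp; try tauto) (by ext t; simp; try tauto) hc
  · exact perm u x z v x' z' (by ext t; simp; try tauto) (by ext t; simp; try tauto) hc
  · exact perm u x z v x' y' (by ext t; simp; try tauto) (by ext t; simp; try tauto) hc
  · exact perm u x y v y' z' (by ext t; simp; try tauto) (by ext t; simp; try tauto) hc
  · exact perm u x y v x' z' (by ext t; simp; try tauto) (by ext t; simp; try tauto) hc
  · exact perm u x y v x' y' (by ext t; simp; try tauto) (by ext t; simp; try tauto) hc
end
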